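/- arXiv:1503.01992 — 8 statements merged into one kernel-verified Lean document; each statement's English description precedes it below -/
import Mathlib

section
/- Let d > 1 be a squarefree integer and write the fundamental unit of ℚ(√d) as ε_d = x + y√d, where x and y are integers or half-integers. If N(ε_d) = 1, then none of the four rational numbers 2(x+1), 2(x−1), 2d(x+1), 2d(x−1) is the square of a rational number. -/
open IntermediateField

/-- The real quadratic field ℚ(√d) as a subfield of ℝ. -/
noncomputable def Qsqrt (d : ℕ) : IntermediateField ℚ ℝ :=
  IntermediateField.adjoin ℚ {Real.sqrt d}

/-- `z` is a unit of the ring of integers of the subfield `K` of ℝ. -/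
def IsUnitOf (K : IntermediateField ℚ ℝ) (z : ℝ) : Prop :=
  z ∈ K ∧ z ≠ 0 ∧ IsIntegral ℤ z ∧ IsIntegral ℤ z⁻¹

/-- `ε` is the fundamental unit of the real quadratic field `K`:
it is a unit, `1 < ε`, and every unit of `K` equals `±ε^n` for some `n : ℤ`. -/
def IsFundUnit (K : IntermediateField ℚ ℝ) (ε : ℝ) : Prop :=
  IsUnitOf K ε ∧ 1 < ε ∧
    ∀ z : ℝ, IsUnitOf K z → ∃ n : ℤ, z = ε ^ n ∨ z = -(ε ^ n)

/-- Core: the fundamental unit has no square root inside K. -/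
lemma core (K : IntermediateField ℚ ℝ) (ε : ℝ) (hf : IsFundUnit K ε)
    (t : ℝ) (htK : t ∈ K) (ht : t ^ 2 = ε) : False := by
  obtain ⟨⟨hεK, hε0, hεi, hεii⟩, hε1, hmax⟩ := hf
  have ht0 : t ≠ 0 := by
    intro h
    rw [h] at ht
    simp at ht
    linarith
  have hti : IsIntegral ℤ t := IsIntegral.of_pow (n := 2) two_pos (ht ▸ hεi)
  have htii : IsIntegral ℤ t⁻¹ := by
    refine IsIntegral.of_pow (n := 2) two_pos ?_
    rw [inv_pow, ht]; exact hεii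
  obtain ⟨n, hn⟩ := hmax t ⟨htK, ht0, hti, htii⟩
  have h2 : ε ^ (1 : ℤ) = ε ^ (n * 2) := by
    rw [zpow_one, zpow_mul, zpow_two]
    conv_lhs => rw [← ht]
    rcases hn with h | h <;> rw [h] <;> ring
  have := zpow_right_injective₀ (by linarith : (0:ℝ) < ε) (by linarith) h2.symm
  omega

theorem stmt0 (d : ℕ) (hd : 1 < d) (hsf : Squarefree d)
    (x y : ℚ) (hx : ∃ m : ℤ, 2 * x = m) (hy : ∃ m : ℤ, 2 * y = m)
    (hfund : IsFundUnit (Qsqrt d) ((x : ℝ) + (y : ℝ) * Real.sqrt d))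
    (hnorm : x ^ 2 - d * y ^ 2 = 1) :
    (¬ ∃ r : ℚ, r ^ 2 = 2 * (x + 1)) ∧ (¬ ∃ r : ℚ, r ^ 2 = 2 * (x - 1)) ∧
    (¬ ∃ r : ℚ, r ^ 2 = 2 * d * (x + 1)) ∧ (¬ ∃ r : ℚ, r ^ 2 = 2 * d * (x - 1)) := by
  set s : ℝ := Real.sqrt d with hs_def
  set ε : ℝ := (x : ℝ) + (y : ℝ) * s with hε_def
  have hd0 : (0:ℝ) ≤ (d : ℝ) := by positivity
  have hs2 : s ^ 2 = (d : ℝ) := Real.sq_sqrt hd0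
  have hεK : ε ∈ Qsqrt d := hfund.1.1
  have hε1 : (1:ℝ) < ε := hfund.2.1
  have hsK : s ∈ Qsqrt d := IntermediateField.mem_adjoin_simple_self ℚ (Real.sqrt d)
  have hnormR : (x:ℝ)^2 - (d:ℝ)*(y:ℝ)^2 = 1 := by exact_mod_cast hnorm
  have hdQ : (0:ℚ) < (d:ℚ) := by exact_mod_cast Nat.zero_lt_of_lt hd
  -- x is not ±1
  have hy0 : ∀ h : y = 0, False := by
    intro h
    subst h
    have hx2 : x^2 = 1 := by linarith [hnorm]
    have : ε = (x:ℝ) := by rw [hε_def]; push_cast; ring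
    have hx1 : (1:ℝ) < (x:ℝ) := this ▸ hε1
    have : (1:ℚ) < x := by exact_mod_cast hx1
    nlinarith
  have hxp : x + 1 ≠ 0 := by
    intro h
    apply hy0
    have : (d:ℚ) * y^2 = 0 := by nlinarith
    have := mul_eq_zero.mp this
    rcases this with h' | h'
    · exact absurd h' (ne_of_gt hdQ)
    · exact pow_eq_zero_iff two_ne_zero |>.mp h'
  have hxm : x - 1 ≠ 0 := by
    intro h
    apply hy0
    have : (d:ℚ) * y^2 = 0 := by nlinarith
    rcases mul_eq_zero.mp this with h' | h'
    · exact absurd h' (ne_of_gt hdQ)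
    · exact pow_eq_zero_iff two_ne_zero |>.mp h'
  -- key algebraic identities
  have hplus : (ε + 1)^2 = 2*((x:ℝ)+1)*ε := by
    rw [hε_def]; linear_combination (y:ℝ)^2 * hs2 - hnormR
  have hminus : (ε - 1)^2 = 2*((x:ℝ)-1)*ε := by
    rw [hε_def]; linear_combination (y:ℝ)^2 * hs2 - hnormR
  -- generic steps
  have stepP : ∀ c : ℝ, c ∈ Qsqrt d → c^2 * (2*((x:ℝ)+1)) = 1 → False := by
    intro c hc hc2
    apply core (Qsqrt d) ε hfund (c * (ε + 1))
      (mul_mem hc (add_mem hεK (one_mem _)))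
    rw [mul_pow, hplus]
    linear_combination ε * hc2
  have stepM : ∀ c : ℝ, c ∈ Qsqrt d → c^2 * (2*((x:ℝ)-1)) = 1 → False := by
    intro c hc hc2
    apply core (Qsqrt d) ε hfund (c * (ε - 1))
      (mul_mem hc (sub_mem hεK (one_mem _)))
    rw [mul_pow, hminus]
    linear_combination ε * hc2
  have hrK : ∀ r : ℚ, ((r:ℝ))⁻¹ ∈ Qsqrt d := by
    intro r
    refine inv_mem ?_
    have := (Qsqrt d).algebraMap_mem r
    simpa using this
  refine ⟨?_, ?_, ?_, ?_⟩
  · rintro ⟨r, hr⟩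
    have hr0 : r ≠ 0 := by
      intro h; subst h; apply hxp; nlinarith
    have hrR : ((r:ℝ))^2 = 2*((x:ℝ)+1) := by exact_mod_cast hr
    have hr0R : ((r:ℝ)) ≠ 0 := by exact_mod_cast hr0
    exact stepP ((r:ℝ))⁻¹ (hrK r) (by field_simp; linarith [hrR])
  · rintro ⟨r, hr⟩
    have hr0 : r ≠ 0 := by
      intro h; subst h; apply hxm; nlinarith
    have hrR : ((r:ℝ))^2 = 2*((x:ℝ)-1) := by exact_mod_cast hr
    have hr0R : ((r:ℝ)) ≠ 0 := by exact_mod_cast hr0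
    exact stepM ((r:ℝ))⁻¹ (hrK r) (by field_simp; linarith [hrR])
  · rintro ⟨r, hr⟩
    have hr0 : r ≠ 0 := by
      intro h; subst h
      apply hxp
      have : (2:ℚ) * d * (x+1) = 0 := by nlinarith
      rcases mul_eq_zero.mp this with h' | h'
      · rcases mul_eq_zero.mp h' with h'' | h''
        · norm_num at h''
        · exact absurd h'' (ne_of_gt hdQ)
      · exact h'
    have hrR : ((r:ℝ))^2 = 2*(d:ℝ)*((x:ℝ)+1) := by exact_mod_cast hr
    have hr0R : ((r:ℝ)) ≠ 0 := by exact_mod_cast hr0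
    refine stepP (s * ((r:ℝ))⁻¹) (mul_mem hsK (hrK r)) ?_
    field_simp
    rw [hs2]
    linarith [hrR]
  · rintro ⟨r, hr⟩
    have hr0 : r ≠ 0 := by
      intro h; subst h
      apply hxm
      have : (2:ℚ) * d * (x-1) = 0 := by nlinarith
      rcases mul_eq_zero.mp this with h' | h'
      · rcases mul_eq_zero.mp h' with h'' | h''
        · norm_num at h''
        · exact absurd h'' (ne_of_gt hdQ)
      · exact h'
    have hrR : ((r:ℝ))^2 = 2*(d:ℝ)*((x:ℝ)-1) := by exact_mod_cast hr
    have hr0R : ((r:ℝ)) ≠ 0 := by exact_mod_cast hr0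
    refine stepM (s * ((r:ℝ))⁻¹) (mul_mem hsK (hrK r)) ?_
    field_simp
    rw [hs2]
    linarith [hrR]
end

section
/- Let q be a prime with q ≡ 3 (mod 4) and write the fundamental unit of ℚ(√q) as ε_q = x + y√q with x, y ∈ ℤ. Then x is an even integer, one of x+1, x−1 is the square of a natural number, and 2ε_q is the square of an element of ℚ(√q). -/
/-!
The inverse of `ε = x + y√q` is integral, and the constant coefficient of its minimal polynomial
is `1 / (x² - qy²)`, so the norm is `±1`; it is not `-1` because `-1` is not a square mod `q`.
Hence `(x - 1)(x + 1) = qy²`. If `x = 2u + 1` were odd, then `y = 2t` and `u (u + 1) = qt²` with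
`u`, `u + 1` coprime: either `u = a²`, `u + 1 = qb²`, impossible mod `q`, or `u = qb²`,
`u + 1 = a²`, and then `a + b√q` is a unit whose square is `ε`, contradicting fundamentality.
So `x` is even, `x - 1` and `x + 1` are coprime, one is `a²` and the other `qb²` with `ab = y`,
and `(a + b√q)² = 2ε`.
-/

open IntermediateField

open Polynomial

lemma isIntegral_int_add_int_mul_sqrt (d : ℕ) (a b : ℤ) :
    IsIntegral ℤ ((a : ℝ) + b * √d) := by
  refine ⟨X ^ 2 - C (2 * a) * X + C (a ^ 2 - d * b ^ 2), by monicity!, ?_⟩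
  have hd : √(d : ℝ) ^ 2 = d := Real.sq_sqrt d.cast_nonneg
  rw [← aeval_def]
  simp only [map_add, map_sub, map_mul, map_pow, aeval_X, map_natCast, map_ofNat, eq_intCast,
    map_intCast]
  linear_combination (b : ℝ) ^ 2 * hd

lemma int_add_int_mul_sqrt_mem_Qsqrt (d : ℕ) (a b : ℤ) : (a : ℝ) + b * √d ∈ Qsqrt d :=
  add_mem (intCast_mem _ a) (mul_mem (intCast_mem _ b) (mem_adjoin_simple_self ℚ _))

lemma sq_int_add_int_mul_sqrt (d : ℕ) (a b : ℤ) :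
    ((a : ℝ) + b * √d) ^ 2 =
      ((a ^ 2 + d * b ^ 2 : ℤ) : ℝ) + ((2 * a * b : ℤ) : ℝ) * √d := by
  push_cast
  linear_combination (b : ℝ) ^ 2 * Real.sq_sqrt d.cast_nonneg

lemma isUnitOf_int_add_int_mul_sqrt {d : ℕ} {a b : ℤ} (h : a ^ 2 - d * b ^ 2 = 1) :
    IsUnitOf (Qsqrt d) ((a : ℝ) + b * √d) := by
  have hd : √(d : ℝ) ^ 2 = d := Real.sq_sqrt d.cast_nonneg
  have hinv : ((a : ℝ) + b * √d) * (a + (-b : ℤ) * √d) = 1 := by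
    push_cast
    linear_combination (by exact_mod_cast h : (a : ℝ) ^ 2 - d * b ^ 2 = 1) - (b : ℝ) ^ 2 * hd
  refine ⟨int_add_int_mul_sqrt_mem_Qsqrt d a b, left_ne_zero_of_mul_eq_one hinv,
    isIntegral_int_add_int_mul_sqrt d a b, ?_⟩
  rw [inv_eq_of_mul_eq_one_right hinv]
  exact isIntegral_int_add_int_mul_sqrt d a (-b)

lemma int_sub_int_mul_sqrt_ne_zero {d : ℕ} (hd : Irrational √d) {x y : ℤ}
    (h : (x : ℝ) + y * √d ≠ 0) : (x : ℝ) - y * √d ≠ 0 := by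
  intro h'
  rcases eq_or_ne y 0 with rfl | hy
  · simp_all
  · exact (hd.intCast_mul hy).ne_int x (by linarith)

lemma minpoly_rat_eq_of_irrational {α : ℝ} (hα : Irrational α) {p : ℚ[X]} (hp : p.Monic)
    (hdeg : p.natDegree = 2) (hroot : aeval α p = 0) : minpoly ℚ α = p := by
  have hint : IsIntegral ℚ α := ⟨p, hp, hroot⟩
  refine (eq_of_monic_of_dvd_of_natDegree_le (minpoly.monic hint) hp
    (minpoly.dvd ℚ α hroot) ?_).symm
  rw [hdeg, minpoly.two_le_natDegree_iff hint]
  rintro ⟨r, rfl⟩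
  exact hα ⟨r, rfl⟩

lemma exists_int_eq_sq_sub_mul_sq_of_isIntegral {d : ℕ} (hd : Irrational √d) {r s : ℚ}
    (h : IsIntegral ℤ ((r : ℝ) + s * √d)) : ∃ m : ℤ, r ^ 2 - d * s ^ 2 = m := by
  rcases eq_or_ne s 0 with rfl | hs
  · have hr : IsIntegral ℤ r :=
      (isIntegral_algebraMap_iff (algebraMap ℚ ℝ).injective).mp (by simpa using h)
    obtain ⟨m, rfl⟩ := IsIntegrallyClosed.isIntegral_iff.mp hr
    exact ⟨m ^ 2, by simp⟩
  · have hsq : √(d : ℝ) ^ 2 = d := Real.sq_sqrt d.cast_nonneg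
    have hmin :
        minpoly ℚ ((r : ℝ) + s * √d) = X ^ 2 - C (2 * r) * X + C (r ^ 2 - d * s ^ 2) := by
      refine minpoly_rat_eq_of_irrational ((hd.ratCast_mul hs).ratCast_add r) (by monicity!)
        (by compute_degree!) ?_
      simp only [map_add, map_sub, map_mul, map_pow, aeval_X, aeval_C, eq_ratCast]
      push_cast
      linear_combination (s : ℝ) ^ 2 * hsq
    refine ⟨(minpoly ℤ ((r : ℝ) + s * √d)).coeff 0, ?_⟩
    have := congrArg (coeff · 0) (minpoly.isIntegrallyClosed_eq_field_fractions' ℚ h)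
    simp only [hmin, coeff_add, coeff_sub, coeff_C_zero, coeff_X_pow, coeff_C_mul_X,
      coeff_map] at this
    simpa using this

lemma sq_sub_mul_sq_eq_one_or_neg_one {d : ℕ} (hd : Irrational √d) {x y : ℤ}
    (hne : (x : ℝ) + y * √d ≠ 0) (hint : IsIntegral ℤ ((x : ℝ) + y * √d)⁻¹) :
    x ^ 2 - d * y ^ 2 = 1 ∨ x ^ 2 - d * y ^ 2 = -1 := by
  have hsq : √(d : ℝ) ^ 2 = d := Real.sq_sqrt d.cast_nonneg
  have hconj : ((x : ℝ) + y * √d) * (x - y * √d) = ((x ^ 2 - d * y ^ 2 : ℤ) : ℝ) := by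
    push_cast
    linear_combination (-(y : ℝ) ^ 2) * hsq
  generalize hN : x ^ 2 - d * y ^ 2 = N at hconj ⊢
  have hN0 : (N : ℝ) ≠ 0 :=
    hconj ▸ mul_ne_zero hne (int_sub_int_mul_sqrt_ne_zero hd hne)
  have hinv : ((x : ℝ) + y * √d)⁻¹ = ((x / N : ℚ) : ℝ) + ((-y / N : ℚ) : ℝ) * √d := by
    rw [inv_eq_of_mul_eq_one_right]
    push_cast
    field_simp
    linear_combination hconj
  obtain ⟨m, hm⟩ := exists_int_eq_sq_sub_mul_sq_of_isIntegral hd (hinv ▸ hint)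
  have hmN : (N : ℚ) * m = 1 := by
    have hN0' : (N : ℚ) ≠ 0 := by exact_mod_cast hN0
    rw [← hm]
    field_simp
    exact_mod_cast hN
  exact Int.eq_one_or_neg_one_of_mul_eq_one (by exact_mod_cast hmN)

lemma sq_add_one_ne_prime_mul_sq {q : ℕ} (hq : q.Prime) (hq4 : q % 4 = 3) (a b : ℤ) :
    a ^ 2 + 1 ≠ q * b ^ 2 := by
  have := Fact.mk hq
  intro h
  have h' := congrArg (Int.cast : ℤ → ZMod q) h
  push_cast [ZMod.natCast_self, zero_mul] at h'
  exact ZMod.exists_sq_eq_neg_one_iff.mp ⟨a, by linear_combination -h'⟩ hq4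

lemma pos_of_sq_sub_mul_sq_eq_one {d : ℕ} {x y : ℤ} (h : x ^ 2 - d * y ^ 2 = 1)
    (hε : 1 < (x : ℝ) + y * √d) : 0 < x ∧ 0 < y := by
  have hsq : √(d : ℝ) ^ 2 = d := Real.sq_sqrt d.cast_nonneg
  have hconj : ((x : ℝ) + y * √d) * (x - y * √d) = 1 := by
    linear_combination (by exact_mod_cast h : (x : ℝ) ^ 2 - d * y ^ 2 = 1) - (y : ℝ) ^ 2 * hsq
  have hconj_pos : 0 < (x : ℝ) - y * √d := by nlinarith
  have hconj_lt : (x : ℝ) - y * √d < 1 := by nlinarith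
  have hy : 0 < (y : ℝ) * √d := by linarith
  exact ⟨by exact_mod_cast (by linarith : (0 : ℝ) < x),
    by exact_mod_cast pos_of_mul_pos_left hy (Real.sqrt_nonneg _)⟩

lemma IsFundUnit.sq_ne {K : IntermediateField ℚ ℝ} {ε η : ℝ} (hε : IsFundUnit K ε)
    (hη : IsUnitOf K η) : η ^ 2 ≠ ε := by
  obtain ⟨-, hε1, hgen⟩ := hε
  obtain ⟨n, hn⟩ := hgen η hη
  intro h
  have hsq : (ε ^ n) ^ 2 = η ^ 2 := by rcases hn with rfl | rfl <;> ring
  have h2n : ε ^ (n * 2) = ε ^ (1 : ℤ) := by rw [zpow_mul, zpow_one, zpow_two, ← sq, hsq, h]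
  have := zpow_right_injective₀ (by linarith) hε1.ne' h2n
  omega

lemma exists_sq_and_prime_mul_sq_of_dvd {q : ℕ} (hq : q.Prime) {A B t : ℤ} (hA : 0 < A)
    (hB : 0 < B) (hAB : IsCoprime A B) (h : A * B = q * t ^ 2) (hqB : (q : ℤ) ∣ B) :
    ∃ a b : ℤ, a * b = t ∧ A = a ^ 2 ∧ B = q * b ^ 2 := by
  obtain ⟨c, rfl⟩ := hqB
  have hq0 : (0 : ℤ) < q := by exact_mod_cast hq.pos
  have hc : 0 < c := pos_of_mul_pos_right hB hq0.le
  have hAc : A * c = t ^ 2 := mul_left_cancel₀ hq0.ne' (by linear_combination h)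
  have hcop : IsCoprime A c := hAB.of_mul_right_right
  obtain ⟨a, ha⟩ := Int.sq_of_isCoprime hcop hAc
  obtain ⟨b, hb⟩ := Int.sq_of_isCoprime hcop.symm (c := t) (by linear_combination hAc)
  replace ha : A = a ^ 2 := ha.resolve_right fun h' => by nlinarith [sq_nonneg a]
  replace hb : c = b ^ 2 := hb.resolve_right fun h' => by nlinarith [sq_nonneg b]
  have habt : (a * b) ^ 2 = t ^ 2 := by rw [← hAc, ha, hb]; ring
  rcases sq_eq_sq_iff_eq_or_eq_neg.mp habt with habt | habt
  · exact ⟨a, b, habt, ha, by rw [hb]⟩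
  · exact ⟨a, -b, by linarith, ha, by rw [hb]; ring⟩

lemma exists_sq_and_prime_mul_sq {q : ℕ} (hq : q.Prime) {A B t : ℤ} (hA : 0 < A) (hB : 0 < B)
    (hAB : IsCoprime A B) (h : A * B = q * t ^ 2) :
    ∃ a b : ℤ, a * b = t ∧ (A = a ^ 2 ∧ B = q * b ^ 2 ∨ A = q * b ^ 2 ∧ B = a ^ 2) := by
  rcases (Nat.prime_iff_prime_int.mp hq).dvd_mul.mp ⟨t ^ 2, h⟩ with hqA | hqB
  · obtain ⟨a, b, hab, hB', hA'⟩ :=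
      exists_sq_and_prime_mul_sq_of_dvd hq hB hA hAB.symm (t := t) (by linear_combination h) hqA
    exact ⟨a, b, hab, .inr ⟨hA', hB'⟩⟩
  · obtain ⟨a, b, hab, hA', hB'⟩ := exists_sq_and_prime_mul_sq_of_dvd hq hA hB hAB h hqB
    exact ⟨a, b, hab, .inl ⟨hA', hB'⟩⟩

lemma even_of_isFundUnit {q : ℕ} (hq : q.Prime) (hq4 : q % 4 = 3) {x y : ℤ}
    (hfund : IsFundUnit (Qsqrt q) ((x : ℝ) + y * √q)) (hN : x ^ 2 - q * y ^ 2 = 1)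
    (hx : 0 < x) (hy : 0 < y) : Even x := by
  by_contra hodd
  obtain ⟨u, rfl⟩ := Int.not_even_iff_odd.mp hodd
  obtain ⟨t, rfl⟩ : Even y := by
    have hqy : Even ((q : ℤ) * y ^ 2) := ⟨2 * u ^ 2 + 2 * u, by linear_combination -hN⟩
    have hq_odd : ¬Even (q : ℤ) := by rw [Int.even_coe_nat, Nat.even_iff]; omega
    exact (Int.even_pow' two_ne_zero).mp ((Int.even_mul.mp hqy).resolve_left hq_odd)
  have hu : 0 < u := by
    obtain rfl | hu := (by omega : u = 0 ∨ 0 < u)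
    · have hq0 : (0 : ℤ) < q := by exact_mod_cast hq.pos
      nlinarith [mul_pos hq0 (mul_pos hy hy)]
    · exact hu
  obtain ⟨a, b, hab, ⟨hA, hB⟩ | ⟨hA, hB⟩⟩ :=
    exists_sq_and_prime_mul_sq hq (B := u + 1) hu (by omega) ⟨-1, 1, by ring⟩ (t := t)
      (mul_left_cancel₀ four_ne_zero (by linear_combination hN))
  · exact sq_add_one_ne_prime_mul_sq hq hq4 a b (by linarith)
  · have hnorm : a ^ 2 - q * b ^ 2 = 1 := by linarith
    refine hfund.sq_ne (isUnitOf_int_add_int_mul_sqrt hnorm) ?_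
    rw [sq_int_add_int_mul_sqrt, show a ^ 2 + q * b ^ 2 = 2 * u + 1 by linarith,
      show 2 * a * b = t + t by linarith]

theorem stmt1 (q : ℕ) (hq : q.Prime) (hq4 : q % 4 = 3)
    (x y : ℤ)
    (hfund : IsFundUnit (Qsqrt q) ((x : ℝ) + (y : ℝ) * Real.sqrt q)) :
    Even x ∧
    ((∃ n : ℕ, x + 1 = (n : ℤ) ^ 2) ∨ (∃ n : ℕ, x - 1 = (n : ℤ) ^ 2)) ∧
    (∃ w : ℝ, w ∈ Qsqrt q ∧ w ^ 2 = 2 * ((x : ℝ) + (y : ℝ) * Real.sqrt q)) := by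
  have ⟨⟨_, hne, _, hint⟩, hε, _⟩ := hfund
  have hN : x ^ 2 - q * y ^ 2 = 1 :=
    (sq_sub_mul_sq_eq_one_or_neg_one hq.irrational_sqrt hne hint).resolve_right
      fun h => sq_add_one_ne_prime_mul_sq hq hq4 x y (by linarith)
  obtain ⟨hx, hy⟩ := pos_of_sq_sub_mul_sq_eq_one hN hε
  have hxeven := even_of_isFundUnit hq hq4 hfund hN hx hy
  have ⟨k, hk⟩ := hxeven
  obtain ⟨a, b, hab, hsplit⟩ :=
    exists_sq_and_prime_mul_sq hq (A := x - 1) (B := x + 1) (t := y) (by omega) (by omega)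
      ⟨-(k + 1), k, by rw [hk]; ring⟩ (by linear_combination hN)
  refine ⟨hxeven, ?_, a + b * √q, int_add_int_mul_sqrt_mem_Qsqrt q a b, ?_⟩
  · rcases hsplit with ⟨hA, -⟩ | ⟨-, hB⟩
    · exact .inr ⟨a.natAbs, by rw [Int.natCast_natAbs, sq_abs, hA]⟩
    · exact .inl ⟨a.natAbs, by rw [Int.natCast_natAbs, sq_abs, hB]⟩
  · have hsum : a ^ 2 + q * b ^ 2 = 2 * x := by
      rcases hsplit with ⟨hA, hB⟩ | ⟨hA, hB⟩ <;> linarith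
    rw [sq_int_add_int_mul_sqrt, hsum, mul_assoc, hab]
    push_cast
    ring
end

section
/- Let p be an odd prime and write the fundamental unit of ℚ(√(2p)) as ε_{2p} = x + y√(2p) with x, y ∈ ℤ. If N(ε_{2p}) = 1, then one of x+1, x−1 is the square of a natural number, and 2ε_{2p} is the square of an element of ℚ(√(2p)). -/
open IntermediateField

private lemma pos_factor {a b : ℤ} (ha : 0 < a) (hab : 0 < a * b) : 0 < b := by
  by_contra h
  push_neg at h
  nlinarith

private lemma integral_aux (d u v e : ℤ) (s : ℝ) (hs : s ^ 2 = (d : ℝ))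
    (hN : v ^ 2 - d * u ^ 2 = e) :
    IsIntegral ℤ ((v : ℝ) + (u : ℝ) * s) := by
  refine ⟨Polynomial.X ^ 2 + (Polynomial.C (-(2 * v)) * Polynomial.X + Polynomial.C e), ?_, ?_⟩
  · exact Polynomial.monic_X_pow_add
      (lt_of_le_of_lt Polynomial.degree_linear_le (by norm_num))
  · have hNR : (v : ℝ) ^ 2 - (d : ℝ) * (u : ℝ) ^ 2 = (e : ℝ) := by exact_mod_cast hN
    rw [← Polynomial.aeval_def]
    simp only [map_add, map_mul, map_pow, map_neg, map_ofNat, map_intCast, Polynomial.aeval_X,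
      Polynomial.aeval_C, eq_intCast]
    linear_combination (-1 : ℝ) * hNR + (u : ℝ) ^ 2 * hs

private lemma unit_aux (d u v e : ℤ) (s : ℝ) (K : IntermediateField ℚ ℝ)
    (hs : s ^ 2 = (d : ℝ)) (hsK : s ∈ K) (he : e * e = 1)
    (hN : v ^ 2 - d * u ^ 2 = e) (hz : (v : ℝ) + (u : ℝ) * s ≠ 0) :
    IsUnitOf K ((v : ℝ) + (u : ℝ) * s) := by
  refine ⟨?_, hz, integral_aux d u v e s hs hN, ?_⟩
  · exact add_mem (intCast_mem K v) (mul_mem (intCast_mem K u) hsK)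
  · have hNR : (v : ℝ) ^ 2 - (d : ℝ) * (u : ℝ) ^ 2 = (e : ℝ) := by exact_mod_cast hN
    have heR : (e : ℝ) * (e : ℝ) = 1 := by exact_mod_cast he
    have hmul : ((v : ℝ) + (u : ℝ) * s) * (((e * v : ℤ) : ℝ) + ((-(e * u) : ℤ) : ℝ) * s) = 1 := by
      push_cast
      linear_combination (e : ℝ) * hNR - (e : ℝ) * (u : ℝ) ^ 2 * hs + heR
    have hinv : ((v : ℝ) + (u : ℝ) * s)⁻¹ = ((e * v : ℤ) : ℝ) + ((-(e * u) : ℤ) : ℝ) * s :=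
      inv_eq_of_mul_eq_one_right hmul
    rw [hinv]
    exact integral_aux d (-(e * u)) (e * v) e s hs (by linear_combination e ^ 2 * hN + e * he)

private lemma sq_sq_aux (a b c : ℤ) (h : a * b = c ^ 2) (hco : IsCoprime a b)
    (ha : 0 < a) (hb : 0 < b) (hc : 0 < c) :
    ∃ u v : ℤ, 0 ≤ u ∧ 0 ≤ v ∧ a = u ^ 2 ∧ b = v ^ 2 ∧ c = u * v := by
  obtain ⟨u0, hu⟩ := Int.sq_of_isCoprime hco h
  obtain ⟨v0, hv⟩ := Int.sq_of_isCoprime hco.symm (by rw [mul_comm]; exact h)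
  have ha' : a = u0 ^ 2 := by
    rcases hu with h' | h'
    · exact h'
    · nlinarith [sq_nonneg u0]
  have hb' : b = v0 ^ 2 := by
    rcases hv with h' | h'
    · exact h'
    · nlinarith [sq_nonneg v0]
  refine ⟨|u0|, |v0|, abs_nonneg _, abs_nonneg _, by rw [sq_abs]; exact ha',
    by rw [sq_abs]; exact hb', ?_⟩
  have hsq : c ^ 2 = (|u0| * |v0|) ^ 2 := by
    rw [mul_pow, sq_abs, sq_abs, ← ha', ← hb', h]
  have h0 : (c - |u0| * |v0|) * (c + |u0| * |v0|) = 0 := by linear_combination hsq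
  rcases mul_eq_zero.mp h0 with h' | h'
  · linarith
  · have := mul_nonneg (abs_nonneg u0) (abs_nonneg v0)
    linarith

theorem stmt2 (p : ℕ) (hp : p.Prime) (hodd : Odd p)
    (x y : ℤ)
    (hfund : IsFundUnit (Qsqrt (2 * p)) ((x : ℝ) + (y : ℝ) * Real.sqrt (2 * p)))
    (hnorm : x ^ 2 - 2 * p * y ^ 2 = 1) :
    ((∃ n : ℕ, x + 1 = (n : ℤ) ^ 2) ∨ (∃ n : ℕ, x - 1 = (n : ℤ) ^ 2)) ∧
    (∃ w : ℝ, w ∈ Qsqrt (2 * p) ∧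
      w ^ 2 = 2 * ((x : ℝ) + (y : ℝ) * Real.sqrt (2 * p))) := by
  have hp3 : 3 ≤ p := by
    have h2 := hp.two_le
    rcases Nat.odd_iff.mp hodd with h
    omega
  have hp0 : (0:ℤ) < (p:ℤ) := by exact_mod_cast hp.pos
  have h2ppos : (0:ℤ) < 2 * (p:ℤ) := by linarith
  have h2p0 : (2 * (p : ℤ)) ≠ 0 := ne_of_gt h2ppos
  set s : ℝ := Real.sqrt (2 * p) with hs_def
  have hppos : (0 : ℝ) < 2 * p := by positivity
  have hs : s ^ 2 = 2 * (p : ℝ) := Real.sq_sqrt (le_of_lt hppos)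
  have hspos : 0 < s := Real.sqrt_pos.mpr hppos
  have hsd : s ^ 2 = ((2 * p : ℤ) : ℝ) := by rw [hs]; push_cast; ring
  have hsK : s ∈ Qsqrt (2 * p) := by
    have h' : ((2 * p : ℕ) : ℝ) = 2 * (p : ℝ) := by push_cast; ring
    unfold Qsqrt
    rw [h']
    exact subset_adjoin ℚ _ rfl
  set E : ℝ := (x : ℝ) + (y : ℝ) * s with hE_def
  have hE1 : 1 < E := hfund.2.1
  have hnR : (x : ℝ) ^ 2 - 2 * (p : ℝ) * (y : ℝ) ^ 2 = 1 := by exact_mod_cast hnorm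
  have hEC : E * ((x : ℝ) - (y : ℝ) * s) = 1 := by
    rw [hE_def]
    linear_combination hnR - (y : ℝ) ^ 2 * hs
  set C : ℝ := (x : ℝ) - (y : ℝ) * s with hC_def
  have hC0 : 0 < C := by nlinarith
  have hC1 : C < 1 := by nlinarith
  have hx2 : 2 ≤ x := by
    have hxR : 1 < (x : ℝ) := by nlinarith [sq_nonneg (E - 1)]
    have : (1:ℤ) < x := by exact_mod_cast hxR
    omega
  have hy1 : 1 ≤ y := by
    have hyR : 0 < (y : ℝ) := by
      by_contra h
      push_neg at h
      nlinarith
    have : (0:ℤ) < y := by exact_mod_cast hyR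
    omega
  obtain ⟨k, hk⟩ : ∃ k, x = 2 * k + 1 := by
    rcases Int.even_or_odd x with ⟨r, hr⟩ | ⟨r, hr⟩
    · exfalso
      have h4 : 4 * r ^ 2 - 2 * ((p : ℤ) * y ^ 2) = 1 := by
        rw [hr] at hnorm; linarith [hnorm]
      omega
    · exact ⟨r, hr⟩
  obtain ⟨c, hc⟩ : ∃ c, y = 2 * c := by
    have hpy : (p : ℤ) * y ^ 2 = 2 * (k ^ 2 + k) := by
      rw [hk] at hnorm; nlinarith [hnorm]
    have hey : Even ((p : ℤ) * y ^ 2) := ⟨k ^ 2 + k, by linarith⟩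
    have hoddp : Odd (p : ℤ) := by exact_mod_cast hodd
    rcases Int.even_mul.mp hey with h' | h'
    · exact absurd h' (Int.not_even_iff_odd.mpr hoddp)
    · rcases (Int.even_pow.mp h').1 with ⟨t, ht⟩
      exact ⟨t, by omega⟩
  have hkey : k * (k + 1) = 2 * (p : ℤ) * c ^ 2 := by
    have h4 : 4 * (k * (k + 1)) = 4 * (2 * (p : ℤ) * c ^ 2) := by
      rw [hk, hc] at hnorm; nlinarith [hnorm]
    linarith
  have hkpos : 0 < k := by omega
  have hcpos : 0 < c := by omega
  have hco : IsCoprime k (k + 1) := ⟨-1, 1, by ring⟩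
  have hpZ : Prime (p : ℤ) := Nat.prime_iff_prime_int.mp hp
  have hpnd2 : ¬ (p : ℤ) ∣ 2 := by
    intro h'
    have : p ∣ 2 := by exact_mod_cast h'
    have := Nat.le_of_dvd (by norm_num) this
    omega
  have hpdvd : (p : ℤ) ∣ k ∨ (p : ℤ) ∣ (k + 1) := by
    apply (hpZ.dvd_mul).mp
    exact ⟨2 * c ^ 2, by linarith⟩
  have hEfin := hfund.2.2
  have bad : ∀ u v e : ℤ, e * e = 1 → v ^ 2 - 2 * (p : ℤ) * u ^ 2 = e →
      ((v : ℝ) + (u : ℝ) * s) ^ 2 = E → False := by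
    intro u v e he hN hz2
    have hzne : (v : ℝ) + (u : ℝ) * s ≠ 0 := by
      intro h0
      rw [h0] at hz2
      norm_num at hz2
      linarith
    have hunit := unit_aux (2 * p) u v e s (Qsqrt (2 * p)) hsd hsK he
      (by linarith) hzne
    obtain ⟨n, hn⟩ := hEfin _ hunit
    have hE0 : E ≠ 0 := by linarith
    have hzz : ((v : ℝ) + (u : ℝ) * s) ^ 2 = E ^ n * E ^ n := by
      rcases hn with h' | h' <;> rw [h'] <;> ring
    have h2n : E ^ (n + n) = E ^ (1 : ℤ) := by
      rw [zpow_add₀ hE0, ← hzz, hz2, zpow_one]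
    have := zpow_right_injective₀ (by linarith : (0:ℝ) < E) (by linarith : E ≠ 1) h2n
    omega
  rcases hpdvd with hpk | hpk1
  · rcases Int.even_or_odd k with ⟨k1, hk1⟩ | ⟨k1, hk1⟩
    · -- k even and p ∣ k : bad case A
      exfalso
      have hk2 : k = 2 * k1 := by omega
      obtain ⟨m, hm⟩ : (p : ℤ) ∣ k1 := by
        rcases (hpZ.dvd_mul).mp (by rwa [hk2] at hpk) with h' | h'
        · exact absurd h' hpnd2
        · exact h'
      have hkm : k = 2 * (p : ℤ) * m := by rw [hk2, hm]; ring
      have hmk : m * (k + 1) = c ^ 2 := by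
        apply mul_left_cancel₀ h2p0
        rw [← mul_assoc]
        calc 2 * (p:ℤ) * m * (k+1) = k * (k+1) := by rw [hkm]
        _ = 2 * (p:ℤ) * c ^ 2 := hkey
      have hmpos : 0 < m := pos_factor h2ppos (by rw [← hkm]; exact hkpos)
      have hcom : IsCoprime m (k + 1) :=
        hco.of_isCoprime_of_dvd_left ⟨2 * (p:ℤ), by linarith [hkm]⟩
      obtain ⟨u, v, hu0, hv0, hmu, hkv, hcuv⟩ := sq_sq_aux m (k+1) c hmk hcom hmpos (by omega) hcpos
      have hxint : x = v ^ 2 + 2 * (p:ℤ) * u ^ 2 := by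
        linear_combination hk + hkm + 2 * (p:ℤ) * hmu + hkv
      have hyint : y = 2 * (u * v) := by rw [hc, hcuv]
      refine bad u v 1 (by ring) (by linear_combination - hkv + hkm + 2 * (p:ℤ) * hmu) ?_
      have hxR : (x : ℝ) = (v:ℝ) ^ 2 + 2 * (p:ℝ) * (u:ℝ) ^ 2 := by exact_mod_cast hxint
      have hyR : (y : ℝ) = 2 * ((u:ℝ) * (v:ℝ)) := by exact_mod_cast hyint
      rw [hE_def]
      linear_combination (u:ℝ) ^ 2 * hs - hxR - s * hyR
    · -- k odd, p ∣ k : case D, x + 1 square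
      have hk2 : k + 1 = 2 * (k1 + 1) := by omega
      obtain ⟨a1, ha1⟩ := hpk
      have hfac : a1 * (k1 + 1) = c ^ 2 := by
        apply mul_left_cancel₀ h2p0
        rw [← mul_assoc]
        linear_combination hkey - (k+1) * ha1 - (p:ℤ) * a1 * hk2
      have ha1pos : 0 < a1 := pos_factor hp0 (by rw [← ha1]; exact hkpos)
      have hcof : IsCoprime a1 (k1 + 1) :=
        (hco.of_isCoprime_of_dvd_left ⟨(p:ℤ), by linarith [ha1]⟩).of_isCoprime_of_dvd_right
          ⟨2, by linarith [hk2]⟩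
      obtain ⟨u, v, hu0, hv0, hau, hbv, hcuv⟩ := sq_sq_aux a1 (k1+1) c hfac hcof ha1pos (by omega) hcpos
      have h2x : 2 * x = 2 * (p:ℤ) * u ^ 2 + 4 * v ^ 2 := by
        linear_combination 2 * hk + 2 * ha1 + 2 * (p:ℤ) * hau + 2 * hk2 + 4 * hbv
      have hyint : y = 2 * (u * v) := by rw [hc, hcuv]
      constructor
      · left
        refine ⟨(2 * v).toNat, ?_⟩
        rw [Int.toNat_of_nonneg (by linarith)]
        linear_combination hk + 2 * hk2 + 4 * hbv
      · refine ⟨((2 * v : ℤ) : ℝ) + ((u : ℤ) : ℝ) * s,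
          add_mem (intCast_mem _ _) (mul_mem (intCast_mem _ _) hsK), ?_⟩
        have h2xR : 2 * (x:ℝ) = 2 * (p:ℝ) * (u:ℝ) ^ 2 + 4 * (v:ℝ) ^ 2 := by exact_mod_cast h2x
        have hyR : (y : ℝ) = 2 * ((u:ℝ) * (v:ℝ)) := by exact_mod_cast hyint
        push_cast
        linear_combination (u:ℝ) ^ 2 * hs - h2xR - 2 * s * hyR
  · rcases Int.even_or_odd k with ⟨k1, hk1⟩ | ⟨k1, hk1⟩
    · -- k even, p ∣ k+1 : case C, x - 1 square
      have hk2 : k = 2 * k1 := by omega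
      obtain ⟨b1, hb1⟩ := hpk1
      have hfac : k1 * b1 = c ^ 2 := by
        apply mul_left_cancel₀ h2p0
        rw [← mul_assoc]
        linear_combination hkey - (k+1) * hk2 - 2 * k1 * hb1
      have hk1pos : 0 < k1 := by omega
      have hb1pos : 0 < b1 := pos_factor hp0 (by rw [← hb1]; omega)
      have hcof : IsCoprime k1 b1 :=
        (hco.of_isCoprime_of_dvd_left ⟨2, by linarith [hk2]⟩).of_isCoprime_of_dvd_right
          ⟨(p:ℤ), by linarith [hb1]⟩
      obtain ⟨u, v, hu0, hv0, hau, hbv, hcuv⟩ := sq_sq_aux k1 b1 c hfac hcof hk1pos hb1pos hcpos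
      have h2x : 2 * x = 4 * u ^ 2 + 2 * (p:ℤ) * v ^ 2 := by
        linear_combination 2 * hk + 2 * hk2 + 4 * hau + 2 * hb1 + 2 * (p:ℤ) * hbv
      have hyint : y = 2 * (u * v) := by rw [hc, hcuv]
      constructor
      · right
        refine ⟨(2 * u).toNat, ?_⟩
        rw [Int.toNat_of_nonneg (by linarith)]
        linear_combination hk + 2 * hk2 + 4 * hau
      · refine ⟨((2 * u : ℤ) : ℝ) + ((v : ℤ) : ℝ) * s,
          add_mem (intCast_mem _ _) (mul_mem (intCast_mem _ _) hsK), ?_⟩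
        have h2xR : 2 * (x:ℝ) = 4 * (u:ℝ) ^ 2 + 2 * (p:ℝ) * (v:ℝ) ^ 2 := by exact_mod_cast h2x
        have hyR : (y : ℝ) = 2 * ((u:ℝ) * (v:ℝ)) := by exact_mod_cast hyint
        push_cast
        linear_combination (v:ℝ) ^ 2 * hs - h2xR - 2 * s * hyR
    · -- k odd, p ∣ k+1 : bad case B
      exfalso
      have hk2 : k + 1 = 2 * (k1 + 1) := by omega
      obtain ⟨m, hm⟩ : (p : ℤ) ∣ (k1 + 1) := by
        rcases (hpZ.dvd_mul).mp (by rwa [hk2] at hpk1) with h' | h'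
        · exact absurd h' hpnd2
        · exact h'
      have hkm : k + 1 = 2 * (p : ℤ) * m := by rw [hk2, hm]; ring
      have hmk : m * k = c ^ 2 := by
        apply mul_left_cancel₀ h2p0
        rw [← mul_assoc]
        calc 2 * (p:ℤ) * m * k = k * (k+1) := by rw [hkm]; ring
        _ = 2 * (p:ℤ) * c ^ 2 := hkey
      have hmpos : 0 < m := pos_factor h2ppos (by rw [← hkm]; omega)
      have hcom : IsCoprime m k :=
        hco.symm.of_isCoprime_of_dvd_left ⟨2 * (p:ℤ), by linarith [hkm]⟩
      obtain ⟨u, v, hu0, hv0, hmu, hkv, hcuv⟩ := sq_sq_aux m k c hmk hcom hmpos hkpos hcpos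
      have hxint : x = v ^ 2 + 2 * (p:ℤ) * u ^ 2 := by
        linear_combination hk + hkv + hkm + 2 * (p:ℤ) * hmu
      have hyint : y = 2 * (u * v) := by rw [hc, hcuv]
      refine bad u v (-1) (by ring) (by linear_combination - hkv + hkm + 2 * (p:ℤ) * hmu) ?_
      have hxR : (x : ℝ) = (v:ℝ) ^ 2 + 2 * (p:ℝ) * (u:ℝ) ^ 2 := by exact_mod_cast hxint
      have hyR : (y : ℝ) = 2 * ((u:ℝ) * (v:ℝ)) := by exact_mod_cast hyint
      rw [hE_def]
      linear_combination (u:ℝ) ^ 2 * hs - hxR - s * hyR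
end

section
/- Let F = ℚ(√2, √(pq)) be the real biquadratic field containing the three real quadratic fields ℚ(√2), ℚ(√(pq)), ℚ(√(2pq)). For all exponents j, k, l ∈ {0, 1}, the element (2 + √2)·ε₂^j·ε_{pq}^k·ε_{2pq}^l is not the square of any element of F. -/
open IntermediateField

/-! Let `L = ℚ(√(pq))`. Since `2pq` is not a square, `√2 ∉ L`, so `L(√2) ⊇ F` carries the
`L`-embedding `σ : √2 ↦ -√2`. The units `ε₂` and `ε_{2pq}` lie in quadratic fields on which `σ`
acts as the nontrivial automorphism, so their relative norms `x σ(x)` are rational units, i.e.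
`±1`, while `ε_{pq} ∈ L` is fixed by `σ`. Taking `w σ(w) ∈ L` on both sides of
`w² = (2 + √2) ε₂^j ε_{pq}^k ε_{2pq}^l` gives `(w σ(w))² = ±2 ε_{pq}^{2k}`; positivity forces
the sign `+`, and then `w σ(w) / ε_{pq}^k ∈ L` squares to `2`. -/

open Polynomial

theorem exists_eq_add_mul_of_mem_adjoin {K E : Type*} [Field K] [Field E] [Algebra K E]
    {r : E} {c : K} (hr : r * r = algebraMap K E c) {x : E} (hx : x ∈ K⟮r⟯) :
    ∃ a b : K, x = algebraMap K E a + algebraMap K E b * r := by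
  have hint : IsIntegral K r :=
    ⟨X ^ 2 - C c, monic_X_pow_sub_C c two_ne_zero, by simp [sq, hr]⟩
  rw [← mem_toSubalgebra, adjoin_simple_toSubalgebra_of_isAlgebraic hint.isAlgebraic] at hx
  induction hx using Algebra.adjoin_induction with
  | mem y hy => exact ⟨0, 1, by simp [Set.mem_singleton_iff.mp hy]⟩
  | algebraMap a => exact ⟨a, 0, by simp⟩
  | add y z _ _ hy hz =>
    obtain ⟨a, b, rfl⟩ := hy
    obtain ⟨a', b', rfl⟩ := hz
    exact ⟨a + a', b + b', by simp only [map_add]; ring⟩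
  | mul y z _ _ hy hz =>
    obtain ⟨a, b, rfl⟩ := hy
    obtain ⟨a', b', rfl⟩ := hz
    exact ⟨a * a' + c * b * b', a * b' + a' * b, by
      simp only [map_add, map_mul]
      linear_combination (algebraMap K E b * algebraMap K E b') * hr⟩

theorem exists_eq_add_mul_sqrt_of_mem_Qsqrt {n : ℕ} {x : ℝ} (hx : x ∈ Qsqrt n) :
    ∃ a b : ℚ, x = a + b * √n := by
  obtain ⟨a, b, h⟩ := exists_eq_add_mul_of_mem_adjoin (c := (n : ℚ))
    (by simp [Real.mul_self_sqrt]) hx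
  exact ⟨a, b, by simpa using h⟩

theorem not_isSquare_two_mul_mul {p q : ℕ} (hp : p.Prime) (hq : q.Prime) (hp2 : p ≠ 2)
    (hpq : p ≠ q) : ¬ IsSquare (2 * p * q) := by
  rintro ⟨r, hr⟩
  obtain ⟨s, rfl⟩ : p ∣ r := hp.dvd_of_dvd_pow (n := 2) ⟨2 * q, by rw [sq, ← hr]; ring⟩
  have h2q : 2 * q = p * (s * s) := by
    apply Nat.eq_of_mul_eq_mul_left hp.pos
    linear_combination hr
  rcases hp.dvd_mul.mp ⟨_, h2q⟩ with h | h
  · exact hp2 ((Nat.prime_dvd_prime_iff_eq hp Nat.prime_two).mp h)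
  · exact hpq ((Nat.prime_dvd_prime_iff_eq hp hq).mp h)

theorem sq_ne_two_of_mem_Qsqrt {n : ℕ} (hn : ¬ IsSquare (2 * n)) {x : ℝ} (hx : x ∈ Qsqrt n) :
    x ^ 2 ≠ 2 := by
  obtain ⟨a, b, rfl⟩ := exists_eq_add_mul_sqrt_of_mem_Qsqrt hx
  intro h
  have hsq : √n * √n = n := Real.mul_self_sqrt n.cast_nonneg
  by_cases hab : a * b = 0
  · rcases mul_eq_zero.mp hab with rfl | rfl
    · apply irrational_sqrt_natCast_iff.mpr hn
      refine ⟨|b * n|, ?_⟩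
      rw [Rat.cast_abs, ← Real.sqrt_sq_eq_abs]
      push_cast
      congr 1
      linear_combination n * h - b ^ 2 * n * hsq
    · apply irrational_sqrt_two
      refine ⟨|a|, ?_⟩
      rw [Rat.cast_abs, ← Real.sqrt_sq_eq_abs]
      congr 1
      simpa using h
  · by_cases hsqn : IsSquare n
    · obtain ⟨m, rfl⟩ := hsqn
      apply irrational_sqrt_two
      refine ⟨|a + b * m|, ?_⟩
      rw [Rat.cast_abs, ← Real.sqrt_sq_eq_abs]
      push_cast at h ⊢
      rw [Real.sqrt_mul_self m.cast_nonneg] at h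
      rw [h]
    · apply irrational_sqrt_natCast_iff.mpr hsqn
      refine ⟨(2 - a ^ 2 - b ^ 2 * n) / (2 * a * b), ?_⟩
      obtain ⟨ha, hb⟩ := mul_ne_zero_iff.mp hab
      have ha' : (a : ℝ) ≠ 0 := by exact_mod_cast ha
      have hb' : (b : ℝ) ≠ 0 := by exact_mod_cast hb
      push_cast
      field_simp
      linear_combination -h + b ^ 2 * hsq

theorem Rat.eq_one_or_neg_one_of_isIntegral {r : ℚ} (hr : r ≠ 0) (h : IsIntegral ℤ r)
    (h' : IsIntegral ℤ r⁻¹) : r = 1 ∨ r = -1 := by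
  obtain ⟨z, rfl⟩ := IsIntegrallyClosed.isIntegral_iff.mp h
  obtain ⟨z', hz'⟩ := IsIntegrallyClosed.isIntegral_iff.mp h'
  have hz : z * z' = 1 := by
    have : (z : ℚ) ≠ 0 := hr
    exact_mod_cast (show (z : ℚ) * z' = 1 by simp_all)
  rcases Int.eq_one_or_neg_one_of_mul_eq_one hz with rfl | rfl <;> simp

theorem abs_ratCast_eq_one_of_isIntegral {r : ℚ} (hr : (r : ℝ) ≠ 0)
    (h : IsIntegral ℤ (r : ℝ)) (h' : IsIntegral ℤ (r : ℝ)⁻¹) : |(r : ℝ)| = 1 := by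
  have hinj := (algebraMap ℚ ℝ).injective
  rw [← Rat.cast_inv] at h'
  rcases Rat.eq_one_or_neg_one_of_isIntegral (by exact_mod_cast hr)
    ((isIntegral_algebraMap_iff hinj).mp h) ((isIntegral_algebraMap_iff hinj).mp h')
    with rfl | rfl <;> simp

section SqrtTwoConj

variable {L : IntermediateField ℚ ℝ}

theorem exists_algHom_adjoin_sqrt_two_neg (hL : ∀ x ∈ L, x ^ 2 ≠ 2) :
    ∃ σ : L⟮√2⟯ →ₐ[L] ℝ, σ (AdjoinSimple.gen L √2) = -√2 := by
  have hs : √2 ^ 2 = 2 := Real.sq_sqrt zero_le_two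
  have h2 : ((2 : L) : ℝ) = 2 := rfl
  have hirr : Irreducible (X ^ 2 - C (2 : L)) :=
    X_pow_sub_C_irreducible_of_prime Nat.prime_two fun b hb =>
      hL b b.2 (congrArg Subtype.val hb)
  have hroot : ∀ y : ℝ, y ^ 2 = 2 → aeval y (X ^ 2 - C (2 : L)) = 0 := fun y hy => by
    simp [hy, h2]
  have hint : IsIntegral L √2 := ⟨_, monic_X_pow_sub_C _ two_ne_zero, hroot _ hs⟩
  have hmin : minpoly L (adjoin.powerBasis hint).gen = X ^ 2 - C 2 := by
    rw [adjoin.powerBasis_gen, minpoly_gen]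
    exact (minpoly.eq_of_irreducible_of_monic hirr (hroot _ hs)
      (monic_X_pow_sub_C _ two_ne_zero)).symm
  have hneg : aeval (-√2) (minpoly L (adjoin.powerBasis hint).gen) = 0 := by
    rw [hmin]; exact hroot _ (by rw [neg_sq, hs])
  refine ⟨(adjoin.powerBasis hint).lift _ hneg, ?_⟩
  simpa using (adjoin.powerBasis hint).lift_gen _ hneg

variable (σ : L⟮√2⟯ →ₐ[L] ℝ)

theorem isIntegral_algHom_apply {x : L⟮√2⟯} (hx : IsIntegral ℤ (x : ℝ)) :
    IsIntegral ℤ (σ x) :=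
  ((isIntegral_algHom_iff ((L⟮√2⟯).val.toRingHom.toIntAlgHom) Subtype.val_injective).mp hx).map
    σ.toRingHom.toIntAlgHom

theorem abs_mul_algHom_apply_eq_one_of_isUnitOf {m : ℕ} {s : L⟮√2⟯} (hs : (s : ℝ) = √m)
    (hσs : σ s = -s) {x : L⟮√2⟯} (hx : IsUnitOf (Qsqrt m) x) : |x * σ x| = 1 := by
  obtain ⟨hxm, hx0, hxint, hxint'⟩ := hx
  obtain ⟨a, b, hab⟩ := exists_eq_add_mul_sqrt_of_mem_Qsqrt hxm
  have hσx : σ x = a - b * √m := by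
    have : x = (a : L⟮√2⟯) + (b : L⟮√2⟯) * s := Subtype.ext (by simp [hab, hs])
    rw [this, map_add, map_mul, map_ratCast, map_ratCast, hσs, hs]
    ring
  have hnorm : x * σ x = ((a ^ 2 - m * b ^ 2 : ℚ) : ℝ) := by
    rw [hσx, hab]
    push_cast
    linear_combination (-(b : ℝ) ^ 2) * Real.mul_self_sqrt m.cast_nonneg
  have hσx0 : σ x ≠ 0 := (map_ne_zero σ).mpr fun h => hx0 (congrArg Subtype.val h)
  have hxint'' : IsIntegral ℤ ((x⁻¹ : L⟮√2⟯) : ℝ) := by simpa using hxint'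
  rw [hnorm]
  apply abs_ratCast_eq_one_of_isIntegral <;> rw [← hnorm]
  · exact mul_ne_zero hx0 hσx0
  · exact hxint.mul (isIntegral_algHom_apply σ hxint)
  · rw [mul_inv, ← map_inv₀]
    exact hxint'.mul (isIntegral_algHom_apply σ hxint'')

variable {σ} (hσ : σ (AdjoinSimple.gen L √2) = -√2)
include hσ

theorem mul_algHom_apply_mem (x : L⟮√2⟯) : x * σ x ∈ L := by
  obtain ⟨a, b, hab⟩ := exists_eq_add_mul_of_mem_adjoin (K := L) (r := (√2 : ℝ)) (c := 2)
    (by simp; rfl) x.2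
  have hx : x = algebraMap L _ a + algebraMap L _ b * AdjoinSimple.gen L √2 := Subtype.ext hab
  have hnorm : x * σ x = (a : ℝ) ^ 2 - 2 * (b : ℝ) ^ 2 := by
    rw [hab, congrArg σ hx, map_add, map_mul, σ.commutes, σ.commutes, hσ]
    simp only [IntermediateField.algebraMap_apply]
    linear_combination (-(b : ℝ) ^ 2) * Real.mul_self_sqrt zero_le_two
  rw [hnorm]
  exact (a ^ 2 - 2 * b ^ 2).2

theorem sq_ne_two_add_sqrt_two_mul (hL : ∀ x ∈ L, x ^ 2 ≠ 2) (w u : L⟮√2⟯) {c : ℝ}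
    (hcL : c ∈ L) (hc : c ≠ 0) (hu : |u * σ u| = 1) (k : ℕ) :
    (w : ℝ) ^ 2 ≠ (2 + √2) * u * c ^ k := by
  intro hw
  set n := w * σ w with hn
  have hσw : σ w ^ 2 = (2 - √2) * σ u * c ^ k := by
    have : w ^ 2 = (2 + AdjoinSimple.gen L √2) * u * algebraMap L _ ⟨c, hcL⟩ ^ k :=
      Subtype.ext (by simpa [show ((2 : L⟮√2⟯) : ℝ) = 2 from rfl] using hw)
    simpa [hσ, sub_eq_add_neg, map_ofNat] using congrArg σ this
  have hn2 : n ^ 2 = 2 * (u * σ u) * (c ^ k) ^ 2 := by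
    rw [hn, mul_pow, hw, hσw]
    linear_combination (-(u : ℝ) * σ u * (c ^ k) ^ 2) * Real.mul_self_sqrt zero_le_two
  have hu1 : (u : ℝ) * σ u = 1 := by
    rcases abs_eq zero_le_one |>.mp hu with h | h
    · exact h
    · rw [h] at hn2
      nlinarith [sq_nonneg n, sq_pos_of_ne_zero (pow_ne_zero k hc)]
  apply hL (n / c ^ k) (div_mem (mul_algHom_apply_mem hσ w) (pow_mem hcL k))
  rw [div_pow, hn2, hu1]
  field_simp

end SqrtTwoConj

theorem stmt7_general (p q : ℕ) (hp : p.Prime) (hq : q.Prime) (hpq : p ≠ q)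
    (hp4 : p % 4 = 1)
    (ε2 εpq ε2pq : ℝ)
    (hε2 : IsFundUnit (Qsqrt 2) ε2)
    (hεpq : IsFundUnit (Qsqrt (p * q)) εpq)
    (hε2pq : IsFundUnit (Qsqrt (2 * p * q)) ε2pq) :
    let F : IntermediateField ℚ ℝ :=
      IntermediateField.adjoin ℚ {Real.sqrt 2, Real.sqrt (p * q)}
    ∀ j k l : ℕ, j ≤ 1 → k ≤ 1 → l ≤ 1 →
      ¬ ∃ w : ℝ, w ∈ F ∧
        w ^ 2 = (2 + Real.sqrt 2) * ε2 ^ j * εpq ^ k * ε2pq ^ l := by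
  intro F j k l _ _ _ ⟨w, hwF, hw⟩
  set L := Qsqrt (p * q)
  have hL : ∀ x ∈ L, x ^ 2 ≠ 2 := fun x => sq_ne_two_of_mem_Qsqrt (by
    rw [← mul_assoc]; exact not_isSquare_two_mul_mul hp hq (by omega) hpq)
  obtain ⟨σ, hσ⟩ := exists_algHom_adjoin_sqrt_two_neg hL
  have hsqrt : √(p * q : ℕ) ∈ L := mem_adjoin_simple_self ℚ _
  let s₂ := AdjoinSimple.gen L √2
  let s₂pq := s₂ * algebraMap L (L⟮√2⟯) ⟨_, hsqrt⟩
  have hs₂pq : (s₂pq : ℝ) = √(2 * p * q : ℕ) := by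
    simp [s₂pq, s₂, mul_assoc, Real.sqrt_mul zero_le_two]
  have hle : ∀ {m : ℕ} (s : L⟮√2⟯), (s : ℝ) = √m → Qsqrt m ≤ (L⟮√2⟯).restrictScalars ℚ :=
    fun s hs => adjoin_simple_le_iff.mpr (hs ▸ s.2)
  have hFK : F ≤ (L⟮√2⟯).restrictScalars ℚ := by
    rw [adjoin_le_iff, Set.insert_subset_iff, Set.singleton_subset_iff]
    exact ⟨s₂.2, by simpa using (algebraMap L (L⟮√2⟯) ⟨_, hsqrt⟩).2⟩
  have hs₂ : (s₂ : ℝ) = √(2 : ℕ) := by simp [s₂]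
  let E₂ : L⟮√2⟯ := ⟨ε2, hle s₂ hs₂ hε2.1.1⟩
  let E₂pq : L⟮√2⟯ := ⟨ε2pq, hle s₂pq hs₂pq hε2pq.1.1⟩
  have hN₂ : |E₂ * σ E₂| = 1 := abs_mul_algHom_apply_eq_one_of_isUnitOf σ hs₂ hσ hε2.1
  have hN₂pq : |E₂pq * σ E₂pq| = 1 :=
    abs_mul_algHom_apply_eq_one_of_isUnitOf σ hs₂pq (by simp [s₂pq, s₂, hσ]) hε2pq.1
  refine sq_ne_two_add_sqrt_two_mul hσ hL ⟨w, hFK hwF⟩ (E₂ ^ j * E₂pq ^ l) hεpq.1.1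
    hεpq.1.2.1 ?_ k ?_
  · rw [map_mul, map_pow, map_pow]
    push_cast
    rw [mul_mul_mul_comm, ← mul_pow, ← mul_pow, abs_mul, abs_pow, abs_pow, hN₂, hN₂pq]
    simp
  · push_cast
    rw [hw]
    ring

theorem stmt7 (p q : ℕ) (hp : p.Prime) (hq : q.Prime) (hpq : p ≠ q)
    (hp4 : p % 4 = 1) (hq4 : q % 4 = 3)
    (ε2 εpq ε2pq : ℝ)
    (hε2 : IsFundUnit (Qsqrt 2) ε2)
    (hεpq : IsFundUnit (Qsqrt (p * q)) εpq)
    (hε2pq : IsFundUnit (Qsqrt (2 * p * q)) ε2pq) :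
    let F : IntermediateField ℚ ℝ :=
      IntermediateField.adjoin ℚ {Real.sqrt 2, Real.sqrt (p * q)}
    ∀ j k l : ℕ, j ≤ 1 → k ≤ 1 → l ≤ 1 →
      ¬ ∃ w : ℝ, w ∈ F ∧
        w ^ 2 = (2 + Real.sqrt 2) * ε2 ^ j * εpq ^ k * ε2pq ^ l :=
  stmt7_general p q hp hq hpq hp4 ε2 εpq ε2pq hε2 hεpq hε2pq
end

section
/- The element i is a norm in the extension k/ℚ(i), i.e. there exists α ∈ k with N_{k/ℚ(i)}(α) = i, if and only if p ≡ 1 (mod 8). (Equivalently: if p ≡ 1 (mod 8) then i is a norm from k to ℚ(i), and if p ≡ 5 (mod 8) then i is not a norm from k to ℚ(i).) -/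
set_option maxHeartbeats 1000000

-- Thue's lemma
lemma thue (p : ℕ) (hp : p.Prime) (s : ZMod p) :
    ∃ x y : ℤ, (x : ZMod p) = s * y ∧ x^2 < p ∧ y^2 < p ∧ ¬(x = 0 ∧ y = 0) := by
  haveI : Fact p.Prime := ⟨hp⟩
  set r := Nat.sqrt p with hr
  have hrp : r * r < p := by
    rcases Nat.lt_or_ge (r*r) p with h | h
    · exact h
    · exfalso
      have h2 : r * r = p := by
        have := Nat.sqrt_le' p
        nlinarith
      rcases (Nat.Prime.eq_one_or_self_of_dvd hp r ⟨r, h2.symm⟩) with h1 | h1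
      · have h2le := hp.two_le; rw [h1] at h2; omega
      · nlinarith [hp.two_le]
  have hcard : Fintype.card (ZMod p) < ((Finset.range (r+1)) ×ˢ (Finset.range (r+1))).card := by
    rw [ZMod.card, Finset.card_product, Finset.card_range]
    have := Nat.lt_succ_sqrt p
    nlinarith
  obtain ⟨⟨a, b⟩, hm, ⟨a', b'⟩, hm', hne, heq⟩ :=
    Finset.exists_ne_map_eq_of_card_lt_of_maps_to hcard
      (fun (x : ℕ × ℕ) (_ : x ∈ (Finset.range (r+1)) ×ˢ (Finset.range (r+1))) =>
        Finset.mem_univ ((x.1 : ZMod p) - s * x.2))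
  simp only [Finset.mem_product, Finset.mem_range] at hm hm'
  refine ⟨(a : ℤ) - a', (b : ℤ) - b', ?_, ?_, ?_, ?_⟩
  · have h0 : (a : ZMod p) - s * b = (a' : ZMod p) - s * b' := heq
    push_cast
    linear_combination h0
  · have h1 : ((a:ℤ) - a')^2 ≤ (r:ℤ) * r := by nlinarith [hm.1, hm.2, hm'.1, hm'.2]
    have h2 : ((r:ℤ) * r) < p := by exact_mod_cast hrp
    linarith
  · have h1 : ((b:ℤ) - b')^2 ≤ (r:ℤ) * r := by nlinarith [hm.1, hm.2, hm'.1, hm'.2]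
    have h2 : ((r:ℤ) * r) < p := by exact_mod_cast hrp
    linarith
  · rintro ⟨h1, h2⟩
    apply hne
    have : a = a' := by omega
    have : b = b' := by omega
    simp_all

lemma no_sqrt2 (y : ℤ) : ∀ x : ℤ, x^2 = 2*y^2 → y = 0 := by
  suffices H : ∀ n : ℕ, ∀ y x : ℤ, y.natAbs = n → x^2 = 2*y^2 → y = 0 by
    intro x h; exact H y.natAbs y x rfl h
  intro n
  induction n using Nat.strong_induction_on with
  | _ n ih =>
    intro y x hn h
    have h2x : (2:ℤ) ∣ x := Int.Prime.dvd_pow' Nat.prime_two ⟨y^2, h⟩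
    obtain ⟨x', rfl⟩ := h2x
    have hy2 : y^2 = 2*x'^2 := by nlinarith
    have h2y : (2:ℤ) ∣ y := Int.Prime.dvd_pow' Nat.prime_two ⟨x'^2, hy2⟩
    obtain ⟨y', rfl⟩ := h2y
    have hx2 : x'^2 = 2*y'^2 := by nlinarith
    rcases eq_or_ne y' 0 with h0 | h0
    · simp [h0]
    · have hlt : y'.natAbs < n := by
        have h2 : (2*y').natAbs = 2 * y'.natAbs := by
          rw [Int.natAbs_mul]; norm_num
        have h0' : 0 < y'.natAbs := Int.natAbs_pos.mpr h0
        omega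
      have := ih _ hlt y' x' rfl hx2
      simp [this]

lemma rep_neg_two (p : ℕ) (hp : p.Prime) (hodd : p % 2 = 1)
    (hs : IsSquare (-2 : ZMod p)) : ∃ a b : ℤ, a^2 + 2*b^2 = p := by
  haveI : Fact p.Prime := ⟨hp⟩
  obtain ⟨s, hs⟩ := hs
  obtain ⟨x, y, hxy, hx2, hy2, hne⟩ := thue p hp s
  have hdvd : (p:ℤ) ∣ x^2 + 2*y^2 := by
    have : ((x^2 + 2*y^2 : ℤ) : ZMod p) = 0 := by
      push_cast
      rw [hxy]
      linear_combination (y:ZMod p)^2 * hs.symm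
    exact_mod_cast (ZMod.intCast_zmod_eq_zero_iff_dvd _ p).mp this
  obtain ⟨k, hk⟩ := hdvd
  have hpos : 0 < x^2 + 2*y^2 := by
    rcases (not_and_or.mp hne) with h | h
    · have := sq_nonneg y; have : 0 < x^2 := by positivity
      nlinarith [sq_nonneg y]
    · have : 0 < y^2 := by positivity
      nlinarith [sq_nonneg x]
  have hub : x^2 + 2*y^2 < 3*p := by linarith
  have hk' : k = 1 ∨ k = 2 := by
    have hp0 : (0:ℤ) < p := by exact_mod_cast hp.pos
    have : 0 < k := by nlinarith
    have : k < 3 := by nlinarith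
    omega
  rcases hk' with rfl | rfl
  · exact ⟨x, y, by linarith⟩
  · -- x^2 + 2y^2 = 2p ⇒ x even
    have h2x : (2:ℤ) ∣ x := by
      have : (2:ℤ) ∣ x^2 := ⟨p - y^2, by linarith⟩
      exact Int.Prime.dvd_pow' Nat.prime_two this
    obtain ⟨x', rfl⟩ := h2x
    exact ⟨y, x', by nlinarith⟩

lemma rep_two (p : ℕ) (hp : p.Prime) (hodd : p % 2 = 1)
    (hs : IsSquare (2 : ZMod p)) : ∃ a b : ℤ, 2*b^2 - a^2 = p := by
  haveI : Fact p.Prime := ⟨hp⟩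
  obtain ⟨s, hs⟩ := hs
  obtain ⟨x, y, hxy, hx2, hy2, hne⟩ := thue p hp s
  have hdvd : (p:ℤ) ∣ x^2 - 2*y^2 := by
    have : ((x^2 - 2*y^2 : ℤ) : ZMod p) = 0 := by
      push_cast
      rw [hxy]
      linear_combination (y:ZMod p)^2 * hs.symm
    exact_mod_cast (ZMod.intCast_zmod_eq_zero_iff_dvd _ p).mp this
  obtain ⟨k, hk⟩ := hdvd
  have hne0 : x^2 - 2*y^2 ≠ 0 := by
    intro h0
    have hy0 : y = 0 := no_sqrt2 y x (by linarith)
    have hx0 : x = 0 := by nlinarith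
    exact hne ⟨hx0, hy0⟩
  have hub : x^2 - 2*y^2 < p := by nlinarith [sq_nonneg y]
  have hlb : -(2*(p:ℤ)) < x^2 - 2*y^2 := by nlinarith [sq_nonneg x]
  have hk' : k = -1 := by
    have hp0 : (0:ℤ) < p := by exact_mod_cast hp.pos
    have : k < 1 := by nlinarith
    have : -2 < k := by nlinarith
    have : k ≠ 0 := by rintro rfl; simp at hk; exact hne0 hk
    omega
  subst hk'
  exact ⟨x, y, by linarith⟩

lemma ratcomb_eq_zero {r s : ℚ} (h : (r:ℂ) + (s:ℂ) * Complex.I = 0) : r = 0 ∧ s = 0 := by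
  have hre := congrArg Complex.re h
  have him := congrArg Complex.im h
  simp at hre him
  exact ⟨by exact_mod_cast hre, by exact_mod_cast him⟩

noncomputable def QI : IntermediateField ℚ ℂ where
  carrier := {z | ∃ r s : ℚ, z = (r:ℂ) + (s:ℂ) * Complex.I}
  mul_mem' := by
    rintro x y ⟨r, s, rfl⟩ ⟨r', s', rfl⟩
    exact ⟨r*r' - s*s', r*s' + s*r', by push_cast; ring_nf; rw [Complex.I_sq]; ring⟩
  add_mem' := by
    rintro x y ⟨r, s, rfl⟩ ⟨r', s', rfl⟩
    exact ⟨r + r', s + s', by push_cast; ring⟩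
  algebraMap_mem' := fun r => ⟨r, 0, by simp⟩
  inv_mem' := by
    rintro x ⟨r, s, rfl⟩
    by_cases h0 : (r:ℂ) + (s:ℂ) * Complex.I = 0
    · rw [h0]; exact ⟨0, 0, by simp⟩
    · have hrs : r^2 + s^2 ≠ 0 := by
        intro h
        obtain ⟨h1, h2⟩ : r = 0 ∧ s = 0 := by
          constructor <;> nlinarith [sq_nonneg r, sq_nonneg s]
        apply h0; rw [h1, h2]; simp
      have hrs' : ((r:ℂ)^2 + (s:ℂ)^2) ≠ 0 := by
        intro h; apply hrs; exact_mod_cast h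
      refine ⟨r/(r^2+s^2), -s/(r^2+s^2), ?_⟩
      refine inv_eq_of_mul_eq_one_right ?_
      push_cast
      field_simp
      ring_nf
      rw [Complex.I_sq]
      ring



lemma descent (p q : ℕ) (hp : p.Prime) (hq : q.Prime) (hpq : p ≠ q) (hp8 : p % 8 = 5) :
    ∀ z x y : GaussianInt,
      x^2 - ((2*p*q : ℤ) : GaussianInt) * y^2 = (⟨0,1⟩ : GaussianInt) * z^2 → z = 0 := by
  haveI : Fact p.Prime := ⟨hp⟩
  have hp5 : 5 ≤ p := by
    rcases Nat.lt_or_ge p 5 with h | h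
    · interval_cases p <;> omega
    · exact h
  have hp4 : p % 4 = 1 := by
    have := Nat.mod_mod_of_dvd p (by norm_num : 4 ∣ 8)
    omega
  obtain ⟨s', t', hst⟩ := Nat.Prime.sq_add_sq (p := p) (by omega)
  set s : ℤ := (s' : ℤ) with hs_def
  set t : ℤ := (t' : ℤ) with ht_def
  have hst' : s^2 + t^2 = (p : ℤ) := by push_cast [← hst]; ring
  have hs0 : s ≠ 0 := by
    intro h
    rw [h] at hst'
    have ht' : t' * t' = p := by push_cast at hst' ⊢; nlinarith
    rcases hp.eq_one_or_self_of_dvd t' ⟨t', ht'.symm⟩ with h1 | h1 <;> nlinarith [hp.two_le]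
  have ht0 : t ≠ 0 := by
    intro h
    rw [h] at hst'
    have hs' : s' * s' = p := by push_cast at hst' ⊢; nlinarith
    rcases hp.eq_one_or_self_of_dvd s' ⟨s', hs'.symm⟩ with h1 | h1 <;> nlinarith [hp.two_le]
  have hs2 : s^2 < p := by nlinarith [sq_nonneg t, (by positivity : (0:ℤ) < t^2)]
  have ht2 : t^2 < p := by nlinarith [(by positivity : (0:ℤ) < s^2)]
  have htz : ((t' : ℕ) : ZMod p) ≠ 0 := by
    rw [Ne, ZMod.natCast_eq_zero_iff]
    intro hd
    have h2 : p ∣ t'^2 := by rw [sq]; exact hd.mul_right t'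
    have ht0' : t' ≠ 0 := by
      intro h; apply ht0; rw [ht_def, h]; simp
    have := Nat.le_of_dvd (Nat.pos_of_ne_zero (pow_ne_zero 2 ht0')) h2
    have ht2' : t'^2 < p := by rw [ht_def] at ht2; exact_mod_cast ht2
    omega
  have hsum : ((s' : ℕ) : ZMod p)^2 + ((t' : ℕ) : ZMod p)^2 = 0 := by
    have h0 : ((s'^2 + t'^2 : ℕ) : ZMod p) = 0 := by rw [hst]; exact ZMod.natCast_self p
    push_cast at h0
    exact h0
  set ι : ZMod p := -(((s' : ℕ) : ZMod p) / ((t' : ℕ) : ZMod p)) with hι_def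
  have hι : ι * ι = ((-1 : ℤ) : ZMod p) := by
    rw [hι_def]
    push_cast
    field_simp
    linear_combination hsum
  set φ : GaussianInt →+* ZMod p := Zsqrtd.lift ⟨ι, hι⟩ with hφ_def
  set π : GaussianInt := ⟨s, t⟩ with hπ_def
  have hπnorm : π.norm = (p : ℤ) := by
    simp [Zsqrtd.norm, hπ_def]
    linear_combination hst'
  have hπ0 : π ≠ 0 := by
    intro h
    rw [h] at hπnorm
    simp [Zsqrtd.norm] at hπnorm
    have : p = 0 := by exact_mod_cast hπnorm.symm
    omega
  have hφπ : φ π = 0 := by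
    simp only [hφ_def, hπ_def, Zsqrtd.lift_apply_apply, hι_def, hs_def, ht_def]
    push_cast
    field_simp
    ring
  -- kernel of φ is (π)
  have key : ∀ w : GaussianInt, φ w = 0 → π ∣ w := by
    intro w hw
    rw [← EuclideanDomain.mod_eq_zero]
    set r : GaussianInt := w % π with hr_def
    have hrφ : φ r = 0 := by
      have hdm : π * (w / π) + w % π = w := EuclideanDomain.div_add_mod w π
      have : φ (π * (w / π) + w % π) = 0 := by rw [hdm]; exact hw
      rw [map_add, map_mul, hφπ, zero_mul, zero_add] at this
      exact this
    have hrnorm : r.norm < (p : ℤ) := by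
      rw [← hπnorm]; exact GaussianInt.norm_mod_lt w hπ0
    have hrnn : 0 ≤ r.norm := Zsqrtd.norm_nonneg (by norm_num) r
    -- from φ r = 0 : r.re + r.im * ι = 0 in ZMod p
    have hrc : ((r.re : ZMod p)) + (r.im : ZMod p) * ι = 0 := by
      simpa [hφ_def, Zsqrtd.lift_apply_apply] using hrφ
    have hdvd1 : (p : ℤ) ∣ (t * r.re - s * r.im) := by
      rw [← ZMod.intCast_zmod_eq_zero_iff_dvd]
      push_cast
      rw [hι_def] at hrc
      field_simp at hrc
      push_cast [hs_def, ht_def]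
      linear_combination hrc
    obtain ⟨k, hk⟩ := hdvd1
    have hiden : (t * r.re - s * r.im)^2 + (s * r.re + t * r.im)^2 = (p:ℤ) * r.norm := by
      have : r.norm = r.re^2 + r.im^2 := by simp [Zsqrtd.norm]; ring
      rw [this, ← hst']; ring
    have hpz : (0:ℤ) < p := by exact_mod_cast hp.pos
    have hsq : (p:ℤ)^2 * k^2 = (t * r.re - s * r.im)^2 := by rw [hk]; ring
    have hk2 : k^2 ≤ 0 := by
      nlinarith [hsq, hiden, hrnorm, hrnn, sq_nonneg (s * r.re + t * r.im)]
    have hk0 : k = 0 := by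
      have := le_antisymm hk2 (sq_nonneg k)
      exact pow_eq_zero_iff (by norm_num) |>.mp this
    rw [hk0, mul_zero] at hk
    have h2 : (s * r.re + t * r.im)^2 = (p:ℤ) * r.norm := by
      rw [← hiden, hk]; ring
    have hdvd2 : (p:ℤ) ∣ (s * r.re + t * r.im) := by
      exact Int.Prime.dvd_pow' (k := 2) hp ⟨r.norm, h2⟩
    obtain ⟨m, hm⟩ := hdvd2
    have hsq2 : (p:ℤ) * ((p:ℤ) * m^2) = (p:ℤ) * r.norm := by rw [← h2, hm]; ring
    have hcan : (p:ℤ) * m^2 = r.norm := mul_left_cancel₀ (ne_of_gt hpz) hsq2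
    have hm2 : m^2 ≤ 0 := by nlinarith [hpz, hrnorm, hcan, sq_nonneg m]
    have hm0 : m = 0 := by
      have := le_antisymm hm2 (sq_nonneg m)
      exact pow_eq_zero_iff (by norm_num) |>.mp this
    rw [hm0, mul_zero] at hm
    have : (p:ℤ) * r.norm = 0 := by rw [← h2, hm]; ring
    have hrn0 : r.norm = 0 := by
      have hpne : (p:ℤ) ≠ 0 := by exact_mod_cast hp.pos.ne'
      exact (mul_eq_zero.mp this).resolve_left hpne
    exact (Zsqrtd.norm_eq_zero_iff (by norm_num : (-1:ℤ) < 0) r).mp hrn0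
  -- π is prime
  have hπprime : Prime π := by
    have hirr : Irreducible π := by
      constructor
      · rw [← Zsqrtd.norm_eq_one_iff]
        rw [hπnorm]
        simp [Int.natAbs_natCast]
        omega
      · intro a b hab
        have hnab : a.norm.natAbs * b.norm.natAbs = p := by
          rw [← Int.natAbs_mul, ← Zsqrtd.norm_mul, ← hab, hπnorm, Int.natAbs_natCast]
        rcases hp.eq_one_or_self_of_dvd a.norm.natAbs ⟨b.norm.natAbs, hnab.symm⟩ with h1 | h1
        · left; rw [← Zsqrtd.norm_eq_one_iff]; exact h1
        · right; rw [← Zsqrtd.norm_eq_one_iff]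
          have := hp.two_le
          nlinarith [hnab, h1]
    exact hirr.prime
  -- main descent by strong induction on the norm of z
  suffices H : ∀ n : ℕ, ∀ z x y : GaussianInt, z.norm.natAbs = n →
      x^2 - ((2*p*q : ℤ) : GaussianInt) * y^2 = (⟨0,1⟩ : GaussianInt) * z^2 → z = 0 by
    intro z x y h
    exact H z.norm.natAbs z x y rfl h
  intro n
  induction n using Nat.strong_induction_on with
  | _ n ih =>
    intro z x y hn heq
    by_cases hz0 : z = 0
    · exact hz0
    have hφi : φ (⟨0,1⟩ : GaussianInt) = ι := by
      simp [hφ_def, Zsqrtd.lift_apply_apply]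
    have hE : (φ x)^2 = ι * (φ z)^2 := by
      have h1 := congrArg φ heq
      simp only [map_sub, map_mul, map_pow, map_intCast, hφi] at h1
      have hpq0 : ((2*p*q : ℤ) : ZMod p) = 0 := by
        rw [ZMod.intCast_zmod_eq_zero_iff_dvd]
        exact ⟨2*q, by push_cast; ring⟩
      rw [hpq0] at h1
      linear_combination h1
    by_cases hφz : φ z = 0
    · -- descent step
      have hφx : φ x = 0 := by
        have h2 : (φ x)^2 = 0 := by rw [hE, hφz]; ring
        exact pow_eq_zero_iff (by norm_num) |>.mp h2
      obtain ⟨x1, rfl⟩ := key x hφx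
      obtain ⟨z1, rfl⟩ := key z hφz
      set πb : GaussianInt := ⟨s, -t⟩ with hπb_def
      have hππb : π * πb = ((p:ℤ) : GaussianInt) := by
        have hre : (π * πb).re = ((p:ℤ) : GaussianInt).re := by
          simp [Zsqrtd.re_mul, hπ_def, hπb_def]
          linear_combination hst'
        have him : (π * πb).im = ((p:ℤ) : GaussianInt).im := by
          simp [Zsqrtd.im_mul, hπ_def, hπb_def]
          ring
        exact Zsqrtd.ext hre him
      have hC : ((2*p*q:ℤ) : GaussianInt) = ((2*q:ℤ) : GaussianInt) * (π * πb) := by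
        rw [hππb, ← Int.cast_mul]
        congr 1
        ring
      have e3 : π * (x1^2 - (⟨0,1⟩:GaussianInt) * z1^2) = ((2*q:ℤ):GaussianInt) * (πb * y^2) := by
        apply mul_left_cancel₀ hπ0
        linear_combination heq + y^2 * hC
      have hdvd : π ∣ ((2*q:ℤ):GaussianInt) * (πb * y^2) :=
        ⟨x1^2 - (⟨0,1⟩:GaussianInt) * z1^2, e3.symm⟩
      have hπnd : ∀ w : GaussianInt, π ∣ w → φ w = 0 := by
        rintro w ⟨u, rfl⟩
        rw [map_mul, hφπ, zero_mul]
      rcases hπprime.2.2 _ _ hdvd with h | h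
      · exfalso
        have h2q : ((2*q:ℤ) : ZMod p) = 0 := by
          have := hπnd _ h
          rwa [map_intCast] at this
        rw [ZMod.intCast_zmod_eq_zero_iff_dvd] at h2q
        have h2q' : p ∣ 2*q := by exact_mod_cast h2q
        rcases (Nat.Prime.dvd_mul hp).mp h2q' with h3 | h3
        · have := Nat.le_of_dvd (by norm_num) h3; omega
        · exact hpq ((Nat.prime_dvd_prime_iff_eq hp hq).mp h3)
      rcases hπprime.2.2 _ _ h with h' | h'
      · exfalso
        have hφπb : φ πb = 0 := hπnd _ h'
        simp only [hφ_def, hπb_def, Zsqrtd.lift_apply_apply, hι_def, hs_def, ht_def] at hφπb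
        push_cast at hφπb
        field_simp at hφπb
        -- hφπb should now say something like 2 * s' = 0 or s' * t' + t' * s' = 0 in ZMod p
        have h2s : ((2*s' : ℕ) : ZMod p) = 0 := by push_cast; linear_combination hφπb
        rw [ZMod.natCast_eq_zero_iff] at h2s
        rcases (Nat.Prime.dvd_mul hp).mp h2s with h3 | h3
        · have := Nat.le_of_dvd (by norm_num) h3; omega
        · have hs0' : s' ≠ 0 := by intro h4; apply hs0; rw [hs_def, h4]; simp
          have := Nat.le_of_dvd (Nat.pos_of_ne_zero hs0') h3
          have hs2' : s'^2 < p := by rw [hs_def] at hs2; exact_mod_cast hs2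
          nlinarith
      · have hy : π ∣ y := hπprime.dvd_of_dvd_pow h'
        obtain ⟨y1, rfl⟩ := hy
        have e4 : x1^2 - ((2*p*q:ℤ):GaussianInt) * y1^2 = (⟨0,1⟩:GaussianInt) * z1^2 := by
          apply mul_left_cancel₀ hπ0
          linear_combination e3 - (π * y1^2) * hC
        have hz1 : z1 ≠ 0 := fun h0 => hz0 (by rw [h0, mul_zero])
        have hlt : z1.norm.natAbs < n := by
          rw [← hn, Zsqrtd.norm_mul, Int.natAbs_mul, hπnorm]
          have h5 : (p:ℤ).natAbs = p := Int.natAbs_natCast p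
          rw [h5]
          have h6 : 0 < z1.norm.natAbs := by
            rw [Int.natAbs_pos]
            intro h7
            exact hz1 ((Zsqrtd.norm_eq_zero_iff (by norm_num : (-1:ℤ) < 0) z1).mp h7)
          nlinarith
        have := ih _ hlt z1 x1 y1 rfl e4
        rw [this, mul_zero]
    · -- p ≡ 5 mod 8 gives a contradiction
      exfalso
      set c : ZMod p := φ x / φ z with hc_def
      have hc2 : c^2 = ι := by
        rw [hc_def]
        field_simp
        linear_combination hE
      have hc4 : c^4 = -1 := by
        have h8 : c^4 = ι * ι := by rw [← hc2]; ring
        rw [h8, hι]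
        push_cast
        ring
      have hc0 : c ≠ 0 := by
        intro h0
        rw [h0] at hc4
        have h9 : (1 : ZMod p) = 0 := by linear_combination hc4
        exact one_ne_zero h9
      have hfermat := ZMod.pow_card_sub_one_eq_one hc0
      obtain ⟨m, hm⟩ : ∃ m, p - 1 = 4*(2*m+1) := ⟨p/8, by omega⟩
      rw [hm, pow_mul, hc4] at hfermat
      have hodd : Odd (2*m+1) := ⟨m, by ring⟩
      rw [hodd.neg_one_pow] at hfermat
      have h2z : ((2:ℕ) : ZMod p) = 0 := by push_cast; linear_combination -hfermat
      rw [ZMod.natCast_eq_zero_iff] at h2z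
      have := Nat.le_of_dvd (by norm_num) h2z
      omega

open Zsqrtd

lemma rat_num_mul (x : ℚ) : (x.num : ℚ) = x * (x.den : ℚ) := by
  have hd : ((x.den:ℚ)) ≠ 0 := by
    have := x.den_nz
    exact_mod_cast this
  calc (x.num : ℚ) = ((x.num : ℚ)/(x.den:ℚ)) * (x.den:ℚ) := by field_simp
    _ = x * (x.den:ℚ) := by rw [Rat.num_div_den]

lemma mem_QI_of (r s : ℚ) : (r:ℂ) + (s:ℂ) * Complex.I ∈ IntermediateField.adjoin ℚ {Complex.I} := by
  have hI : Complex.I ∈ IntermediateField.adjoin ℚ {Complex.I} :=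
    IntermediateField.subset_adjoin ℚ {Complex.I} (Set.mem_singleton _)
  have hr : ∀ u : ℚ, (u:ℂ) ∈ IntermediateField.adjoin ℚ {Complex.I} := by
    intro u
    have h1 : (u:ℂ) = algebraMap ℚ ℂ u := by
      simpa using (map_ratCast (algebraMap ℚ ℂ) u).symm
    rw [h1]
    exact IntermediateField.algebraMap_mem _ u
  exact add_mem (hr r) (mul_mem (hr s) hI)

lemma mem_QI_iff (z : ℂ) (hz : z ∈ IntermediateField.adjoin ℚ {Complex.I}) :
    ∃ r s : ℚ, z = (r:ℂ) + (s:ℂ) * Complex.I := by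
  have hle : IntermediateField.adjoin ℚ {Complex.I} ≤ QI := by
    rw [IntermediateField.adjoin_le_iff]
    rintro w hw
    rw [Set.mem_singleton_iff] at hw
    subst hw
    exact ⟨0, 1, by simp⟩
  exact hle hz

open IntermediateField

theorem stmt9 (p q : ℕ) (hp : p.Prime) (hq : q.Prime) (hpq : p ≠ q)
    (hp4 : p % 4 = 1) (hq4 : q % 4 = 3) :
    -- `i` is a norm in `k/ℚ(i)`, where `k = ℚ(i)(√(2pq))`: writing
    -- `α = a + b·√(2pq)` with `a, b ∈ ℚ(i)`, one has
    -- `N_{k/ℚ(i)}(α) = a² - 2pq·b²`.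
    ((∃ a b : ℂ, a ∈ IntermediateField.adjoin ℚ {Complex.I} ∧
        b ∈ IntermediateField.adjoin ℚ {Complex.I} ∧
        a ^ 2 - (2 * p * q : ℂ) * b ^ 2 = Complex.I) ↔ p % 8 = 1) := by
  haveI : Fact p.Prime := ⟨hp⟩
  haveI : Fact q.Prime := ⟨hq⟩
  have hp2 : p ≠ 2 := by intro h; rw [h] at hp4; norm_num at hp4
  have hq2 : q ≠ 2 := by intro h; rw [h] at hq4; norm_num at hq4
  have hpodd : p % 2 = 1 := by
    have := Nat.mod_mod_of_dvd p (by norm_num : 2 ∣ 4); omega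
  have hqodd : q % 2 = 1 := by
    have := Nat.mod_mod_of_dvd q (by norm_num : 2 ∣ 4); omega
  have hp84 : p % 8 % 4 = p % 4 := Nat.mod_mod_of_dvd p (by norm_num : 4 ∣ 8)
  have hq84 : q % 8 % 4 = q % 4 := Nat.mod_mod_of_dvd q (by norm_num : 4 ∣ 8)
  constructor
  · -- if i is a norm then p ≡ 1 (mod 8)
    rintro ⟨a, b, ha, hb, heq⟩
    by_contra hne
    have hp8 : p % 8 = 5 := by omega
    obtain ⟨a1, a2, rfl⟩ := mem_QI_iff a ha
    obtain ⟨b1, b2, rfl⟩ := mem_QI_iff b hb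
    -- split into real and imaginary parts
    set E1 : ℚ := a1^2 - a2^2 - 2*p*q*(b1^2 - b2^2) with hE1_def
    set E2 : ℚ := 2*a1*a2 - 2*p*q*(2*b1*b2) with hE2_def
    have hkey : ((E1:ℚ):ℂ) + ((E2 - 1 : ℚ):ℂ) * Complex.I = 0 := by
      rw [hE1_def, hE2_def]
      push_cast
      linear_combination heq + (-(a2:ℂ)^2 + 2*(p:ℂ)*(q:ℂ)*(b2:ℂ)^2) * Complex.I_sq
    obtain ⟨hE1, hE2⟩ := ratcomb_eq_zero hkey
    have hE2' : E2 = 1 := by linarith [hE2]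
    -- clear denominators
    set n : ℕ := a1.den * a2.den * b1.den * b2.den with hn_def
    have hn0 : (n:ℚ) ≠ 0 := by
      have := a1.den_nz; have := a2.den_nz; have := b1.den_nz; have := b2.den_nz
      rw [hn_def]; push_cast; positivity
    set A1 : ℤ := a1.num * (a2.den * b1.den * b2.den) with hA1_def
    set A2 : ℤ := a2.num * (a1.den * b1.den * b2.den) with hA2_def
    set B1 : ℤ := b1.num * (a1.den * a2.den * b2.den) with hB1_def
    set B2 : ℤ := b2.num * (a1.den * a2.den * b1.den) with hB2_def
    have hA1 : (A1:ℚ) = a1 * n := by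
      rw [hA1_def, hn_def]
      push_cast
      rw [rat_num_mul a1]
      ring
    have hA2 : (A2:ℚ) = a2 * n := by
      rw [hA2_def, hn_def]
      push_cast
      rw [rat_num_mul a2]
      ring
    have hB1 : (B1:ℚ) = b1 * n := by
      rw [hB1_def, hn_def]
      push_cast
      rw [rat_num_mul b1]
      ring
    have hB2 : (B2:ℚ) = b2 * n := by
      rw [hB2_def, hn_def]
      push_cast
      rw [rat_num_mul b2]
      ring
    have hreQ : (A1:ℚ)^2 - (A2:ℚ)^2 - 2*p*q*((B1:ℚ)^2 - (B2:ℚ)^2) = 0 := by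
      rw [hA1, hA2, hB1, hB2]
      linear_combination (n:ℚ)^2 * hE1
    have himQ : 2*(A1:ℚ)*(A2:ℚ) - 2*p*q*(2*(B1:ℚ)*(B2:ℚ)) = (n:ℚ)^2 := by
      rw [hA1, hA2, hB1, hB2]
      linear_combination (n:ℚ)^2 * hE2'
    have hreZ : A1^2 - A2^2 - 2*(p:ℤ)*q*(B1^2 - B2^2) = 0 := by exact_mod_cast hreQ
    have himZ : 2*A1*A2 - 2*(p:ℤ)*q*(2*B1*B2) = ((n:ℤ))^2 := by exact_mod_cast himQ
    -- build the Gaussian integer equation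
    have hgauss : (⟨A1, A2⟩ : GaussianInt)^2 - ((2*p*q : ℤ) : GaussianInt) * (⟨B1, B2⟩ : GaussianInt)^2
        = (⟨0,1⟩ : GaussianInt) * (⟨(n:ℤ), 0⟩ : GaussianInt)^2 := by
      have h2 : ∀ w : GaussianInt, w^2 = w * w := fun w => sq w
      apply Zsqrtd.ext
      · simp [h2, Zsqrtd.re_mul, Zsqrtd.im_mul]
        linear_combination hreZ
      · simp [h2, Zsqrtd.re_mul, Zsqrtd.im_mul]
        linear_combination himZ
    have := descent p q hp hq hpq hp8 ⟨(n:ℤ), 0⟩ ⟨A1, A2⟩ ⟨B1, B2⟩ hgauss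
    have hn1 : (n:ℤ) = 0 := congrArg Zsqrtd.re this
    rw [Int.natCast_eq_zero] at hn1
    exact hn0 (by rw [hn1]; simp)
  · -- if p ≡ 1 (mod 8) then i is a norm
    intro hp8
    have hq8 : q % 8 = 3 ∨ q % 8 = 7 := by omega
    have hrep : (∃ X C : ℤ, X^2 + 2*C^2 = 2*p*q) ∨ (∃ X C : ℤ, X^2 + 2*(p:ℤ)*q = 2*C^2) := by
      rcases hq8 with hq8 | hq8
      · -- q ≡ 3 mod 8 : 2pq = X² + 2C²
        left
        obtain ⟨a, b, hab⟩ := rep_neg_two p hp hpodd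
          ((ZMod.exists_sq_eq_neg_two_iff hp2).mpr (Or.inl hp8))
        obtain ⟨c, d, hcd⟩ := rep_neg_two q hq hqodd
          ((ZMod.exists_sq_eq_neg_two_iff hq2).mpr (Or.inr hq8))
        refine ⟨2*a*d - 2*b*c, a*c + 2*b*d, ?_⟩
        have : (2*(p:ℤ)*q) = 2*(a^2+2*b^2)*(c^2+2*d^2) := by rw [hab, hcd]
        rw [this]; ring
      · -- q ≡ 7 mod 8 : 2pq = 2C² - X²
        right
        obtain ⟨a, b, hab⟩ := rep_two p hp hpodd
          ((ZMod.exists_sq_eq_two_iff hp2).mpr (Or.inl hp8))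
        obtain ⟨c, d, hcd⟩ := rep_two q hq hqodd
          ((ZMod.exists_sq_eq_two_iff hq2).mpr (Or.inr hq8))
        refine ⟨2*(a*d + b*c), a*c + 2*b*d, ?_⟩
        have : (2*(p:ℤ)*q) = 2*(2*b^2-a^2)*(2*d^2-c^2) := by rw [hab, hcd]
        rw [this]; ring
    have hpq0 : (0:ℤ) < 2*(p:ℤ)*q := by
      have := hp.pos; have := hq.pos
      positivity
    rcases hrep with ⟨X, C, hXC⟩ | ⟨X, C, hXC⟩
    · -- a = X(1-i)/(2C), b = (1-i)/(2C)
      have hC0 : C ≠ 0 := by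
        intro h; rw [h] at hXC
        -- X² = 2pq with X even leads to pq even, contradiction
        have hX2 : X^2 = 2*(p:ℤ)*q := by linarith
        have h2X : (2:ℤ) ∣ X := by
          apply Int.Prime.dvd_pow' (k := 2) Nat.prime_two
          exact ⟨(p:ℤ)*q, by push_cast; linarith⟩
        obtain ⟨X', rfl⟩ := h2X
        have : (p:ℤ)*q = 2*X'^2 := by nlinarith
        have h2pq : (2:ℤ) ∣ (p:ℤ)*q := ⟨X'^2, this⟩
        have h2pq' : 2 ∣ p*q := by exact_mod_cast h2pq
        rcases (Nat.Prime.dvd_mul Nat.prime_two).mp h2pq' with h | h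
        · exact hp2 ((Nat.prime_dvd_prime_iff_eq Nat.prime_two hp).mp h).symm
        · exact hq2 ((Nat.prime_dvd_prime_iff_eq Nat.prime_two hq).mp h).symm
      have hC0' : ((C:ℚ)) ≠ 0 := by exact_mod_cast hC0
      have hC0'' : ((C:ℂ)) ≠ 0 := by exact_mod_cast hC0
      refine ⟨((X:ℚ)/(2*C) : ℚ) + ((-(X:ℚ)/(2*C) : ℚ)) * Complex.I,
              ((1/(2*(C:ℚ)) : ℚ)) + ((-(1:ℚ)/(2*C) : ℚ)) * Complex.I,
              mem_QI_of _ _, mem_QI_of _ _, ?_⟩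
      have hXCc : (X:ℂ)^2 + 2*(C:ℂ)^2 = 2*(p:ℂ)*q := by exact_mod_cast hXC
      push_cast
      field_simp
      linear_combination (-(2:ℂ)*C^2) * Complex.I_sq + (1 - Complex.I)^2 * hXCc
    · -- a = X(1+i)/(2C), b = (-1+i)/(2C)
      have hC0 : C ≠ 0 := by
        intro h; rw [h] at hXC
        nlinarith [sq_nonneg X]
      have hC0' : ((C:ℚ)) ≠ 0 := by exact_mod_cast hC0
      have hC0'' : ((C:ℂ)) ≠ 0 := by exact_mod_cast hC0
      refine ⟨((X:ℚ)/(2*C) : ℚ) + (((X:ℚ)/(2*C) : ℚ)) * Complex.I,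
              ((-(1:ℚ)/(2*C) : ℚ)) + ((1/(2*(C:ℚ)) : ℚ)) * Complex.I,
              mem_QI_of _ _, mem_QI_of _ _, ?_⟩
      have hXCc : (X:ℂ)^2 + 2*(p:ℂ)*q = 2*(C:ℂ)^2 := by exact_mod_cast hXC
      push_cast
      field_simp
      linear_combination ((2:ℂ)*C^2 - 4*(p:ℂ)*q) * Complex.I_sq + (1 + Complex.I)^2 * hXCc
end

section
/- Suppose N(ε_{2p}) = 1, where ε_{2p} is the fundamental unit of ℚ(√(2p)). Then (1) p ≡ 1 (mod 8), and (2) 2p(x−1) is not the square of a natural number, where ε_{2pq} = x + y√(2pq) is the fundamental unit of ℚ(√(2pq)). -/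
open IntermediateField

/- ### Auxiliary lemmas -/

lemma odd_sq_mod8 (a : ℕ) (h : a % 2 = 1) : a ^ 2 % 8 = 1 := by
  obtain ⟨k, rfl⟩ : ∃ k, a = 2 * k + 1 := ⟨a / 2, by omega⟩
  have h2 : 2 ∣ k * (k + 1) := (Nat.even_mul_succ_self k).two_dvd
  have : (2 * k + 1) ^ 2 = 4 * (k * (k + 1)) + 1 := by ring
  omega

lemma sq_mod4 (a : ℕ) : a ^ 2 % 4 = 0 ∨ a ^ 2 % 4 = 1 := by
  rcases Nat.even_or_odd a with ⟨k, rfl⟩ | ⟨k, rfl⟩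
  · left; have : (k + k) ^ 2 = 4 * k ^ 2 := by ring
    omega
  · right; have := odd_sq_mod8 (2 * k + 1) (by omega); omega

lemma cop_succ (k : ℕ) : Nat.Coprime k (k + 1) := by
  have h1 := Nat.gcd_dvd_left k (k + 1)
  have h2 := Nat.gcd_dvd_right k (k + 1)
  have h3 : Nat.gcd k (k + 1) ∣ 1 := by
    have := Nat.dvd_sub h2 h1
    simpa using this
  exact Nat.eq_one_of_dvd_one h3

/-- peel a prime from a coprime product -/
lemma peel {r A B C : ℕ} (hr : r.Prime) (hcop : Nat.Coprime A B) (h : A * B = r * C) :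
    (∃ A', A = r * A' ∧ A' * B = C ∧ Nat.Coprime A' B) ∨
    (∃ B', B = r * B' ∧ A * B' = C ∧ Nat.Coprime A B') := by
  have hd : r ∣ A * B := ⟨C, h⟩
  rcases (Nat.Prime.dvd_mul hr).mp hd with ⟨A', rfl⟩ | ⟨B', rfl⟩
  · left
    refine ⟨A', rfl, ?_, Nat.Coprime.coprime_dvd_left ⟨r, mul_comm r A'⟩ hcop⟩
    have : r * (A' * B) = r * C := by rw [← h]; ring
    exact Nat.eq_of_mul_eq_mul_left hr.pos this
  · right
    refine ⟨B', rfl, ?_, Nat.Coprime.coprime_dvd_right ⟨r, mul_comm r B'⟩ hcop⟩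
    have : r * (A * B') = r * C := by rw [← h]; ring
    exact Nat.eq_of_mul_eq_mul_left hr.pos this

/-- coprime product equal to a square -/
lemma cop_sq {A B Z : ℕ} (hcop : Nat.Coprime A B) (h : A * B = Z ^ 2) :
    ∃ a b, A = a ^ 2 ∧ B = b ^ 2 := by
  have h1 : IsUnit (gcd A B) := Nat.isUnit_iff.mpr hcop
  have h2 : IsUnit (gcd B A) := Nat.isUnit_iff.mpr (Nat.coprime_comm.mp hcop)
  obtain ⟨a, ha⟩ := exists_eq_pow_of_mul_eq_pow h1 h
  obtain ⟨b, hb⟩ := exists_eq_pow_of_mul_eq_pow h2 (by rw [mul_comm]; exact h)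
  exact ⟨a, b, ha, hb⟩

/-- `a² = r·s·b²` with `r` prime not dividing `s` forces `a = 0` -/
lemma notsq {r s a b : ℕ} (hr : r.Prime) (hs : ¬ r ∣ s) (h : a ^ 2 = r * s * b ^ 2) :
    a = 0 := by
  by_contra ha
  have hb : b ≠ 0 := by rintro rfl; simp at h; omega
  have hs0 : s ≠ 0 := by rintro rfl; simp at h; omega
  have key := congrArg Nat.factorization h
  have hrne : r ≠ 0 := hr.pos.ne'
  rw [Nat.factorization_mul (Nat.mul_ne_zero hrne hs0) (pow_ne_zero _ hb),
    Nat.factorization_mul hrne hs0, Nat.factorization_pow, Nat.factorization_pow,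
    hr.factorization] at key
  have key2 := congrArg (fun f : ℕ →₀ ℕ => f r) key
  simp only [Finsupp.coe_add, Finsupp.coe_smul, Pi.add_apply, Pi.smul_apply,
    Finsupp.single_eq_same, smul_eq_mul, Finsupp.smul_apply,
    Nat.factorization_eq_zero_of_not_dvd hs] at key2
  omega

lemma sqrt_int (m : ℕ) : IsIntegral ℤ (Real.sqrt m) := by
  refine ⟨Polynomial.X ^ 2 - Polynomial.C (m : ℤ), Polynomial.monic_X_pow_sub_C _ two_ne_zero, ?_⟩
  have hs2 : Real.sqrt m ^ 2 = (m : ℝ) := Real.sq_sqrt (by positivity)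
  simp [hs2]

lemma natcast_int (c : ℕ) : IsIntegral ℤ ((c : ℝ)) := by
  have : ((c : ℝ)) = algebraMap ℤ ℝ (c : ℤ) := by simp
  rw [this]; exact isIntegral_algebraMap

/-- if `ε` is a fundamental unit and `c + d√m` has norm `±1` then `ε` is not its square -/
lemma fund_no_sqrt (m : ℕ) (ε : ℝ) (hf : IsFundUnit (Qsqrt m) ε)
    (c d : ℕ) (hc : 0 < c)
    (hcd : (c : ℤ) ^ 2 - (m : ℤ) * (d : ℤ) ^ 2 = 1 ∨ (c : ℤ) ^ 2 - (m : ℤ) * (d : ℤ) ^ 2 = -1)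
    (hsq : ((c : ℝ) + (d : ℝ) * Real.sqrt m) ^ 2 = ε) : False := by
  set s : ℝ := Real.sqrt m with hs
  have hs0 : 0 ≤ s := Real.sqrt_nonneg _
  have hs2 : s ^ 2 = (m : ℝ) := Real.sq_sqrt (by positivity)
  set w : ℝ := (c : ℝ) + (d : ℝ) * s with hw
  have hwpos : 0 < w := by
    have h1 : (1 : ℝ) ≤ (c : ℝ) := by exact_mod_cast hc
    have h2 : 0 ≤ (d : ℝ) * s := by positivity
    rw [hw]; nlinarith
  have hmem : w ∈ Qsqrt m := by
    have hsmem : s ∈ Qsqrt m := IntermediateField.subset_adjoin ℚ _ rfl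
    exact add_mem (_root_.natCast_mem _ c) (mul_mem (_root_.natCast_mem _ d) hsmem)
  have hint : IsIntegral ℤ w := (natcast_int c).add ((natcast_int d).mul (sqrt_int m))
  have hconj : w * ((c : ℝ) - (d : ℝ) * s) =
      (((c : ℤ) ^ 2 - (m : ℤ) * (d : ℤ) ^ 2 : ℤ) : ℝ) := by
    push_cast
    nlinarith [hs2]
  have hintinv : IsIntegral ℤ w⁻¹ := by
    rcases hcd with h1 | h1
    · have : w⁻¹ = (c : ℝ) - (d : ℝ) * s := by
        refine (inv_eq_of_mul_eq_one_right ?_)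
        rw [hconj, h1]; norm_num
      rw [this]; exact (natcast_int c).sub ((natcast_int d).mul (sqrt_int m))
    · have : w⁻¹ = (d : ℝ) * s - (c : ℝ) := by
        refine (inv_eq_of_mul_eq_one_right ?_)
        have : w * ((d : ℝ) * s - c) = -(w * ((c : ℝ) - d * s)) := by ring
        rw [this, hconj, h1]; norm_num
      rw [this]; exact ((natcast_int d).mul (sqrt_int m)).sub (natcast_int c)
  obtain ⟨n, hn⟩ := hf.2.2 w ⟨hmem, hwpos.ne', hint, hintinv⟩
  have hε1 : 1 < ε := hf.2.1
  have hεpos : 0 < ε := lt_trans one_pos hε1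
  have hwn : w = ε ^ n := by
    rcases hn with h | h
    · exact h
    · exfalso; have := zpow_pos hεpos n; rw [h] at hwpos; linarith
  have key : ε ^ (1 : ℤ) = ε ^ (2 * n) := by
    calc ε ^ (1 : ℤ) = w ^ (2 : ℕ) := by rw [zpow_one, hsq]
    _ = (ε ^ n) ^ (2 : ℕ) := by rw [hwn]
    _ = ε ^ (2 * n) := by
        rw [← zpow_natCast (ε ^ n) 2, ← zpow_mul, mul_comm]
        norm_num
  have := zpow_right_injective₀ hεpos hε1.ne' key
  omega

/-- descent set-up for a Pell solution `X² = 2DY² + 1` with `D` odd -/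
lemma split_pell {X D Y : ℕ} (hD : D % 2 = 1) (hY : 1 ≤ Y) (hDpos : 2 ≤ D)
    (h : X ^ 2 = 2 * D * Y ^ 2 + 1) :
    ∃ k Z, 1 ≤ k ∧ 1 ≤ Z ∧ X = 2 * k + 1 ∧ Y = 2 * Z ∧ k * (k + 1) = 2 * (D * Z ^ 2) := by
  have hXodd : X % 2 = 1 := by
    rcases Nat.even_or_odd X with ⟨t, rfl⟩ | hX
    · exfalso
      have h4 : (t + t) ^ 2 = 4 * t ^ 2 := by ring
      have h5 : 2 * D * Y ^ 2 = 2 * (D * Y ^ 2) := by ring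
      omega
    · exact Nat.odd_iff.mp hX
  obtain ⟨k, rfl⟩ : ∃ k, X = 2 * k + 1 := ⟨X / 2, by omega⟩
  have hexp : (2 * k + 1) ^ 2 = 4 * (k * (k + 1)) + 1 := by ring
  have h5 : 2 * D * Y ^ 2 = 2 * (D * Y ^ 2) := by ring
  -- 2 * (k(k+1)) = D * Y^2
  have hkk : 2 * (k * (k + 1)) = D * Y ^ 2 := by omega
  have hX8 : (2 * k + 1) ^ 2 % 8 = 1 := odd_sq_mod8 _ (by omega)
  -- Y is even
  have hYe : Y % 2 = 0 := by
    rcases Nat.even_or_odd Y with hE | ⟨t, rfl⟩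
    · exact Nat.even_iff.mp hE
    · exfalso
      obtain ⟨d, rfl⟩ : ∃ d, D = 2 * d + 1 := ⟨D / 2, by omega⟩
      have : (2 * d + 1) * (2 * t + 1) ^ 2 =
          2 * (4 * d * t ^ 2 + 4 * d * t + 2 * t ^ 2 + 2 * t + d) + 1 := by ring
      omega
  obtain ⟨Z, rfl⟩ : ∃ Z, Y = 2 * Z := ⟨Y / 2, by omega⟩
  have hZpos : 1 ≤ Z := by omega
  have hsq : D * (2 * Z) ^ 2 = 4 * (D * Z ^ 2) := by ring
  have hk1 : 1 ≤ k := by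
    rcases Nat.eq_zero_or_pos k with rfl | h
    · exfalso
      have hZ2 : 1 ≤ Z ^ 2 := Nat.one_le_pow _ _ (by omega)
      have : 2 ≤ D * Z ^ 2 := le_trans hDpos (Nat.le_mul_of_pos_right _ (by omega))
      omega
    · exact h
  exact ⟨k, Z, hk1, hZpos, rfl, rfl, by omega⟩

theorem stmt14 (p q : ℕ) (hp : p.Prime) (hq : q.Prime) (hpq : p ≠ q)
    (hp4 : p % 4 = 1) (hq4 : q % 4 = 3)
    (u v : ℤ)
    (hε2p : IsFundUnit (Qsqrt (2 * p)) ((u : ℝ) + (v : ℝ) * Real.sqrt (2 * p)))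
    (hnorm2p : u ^ 2 - 2 * p * v ^ 2 = 1)
    (x y : ℤ) (hx : 0 < x) (hy : 0 < y)
    (hfund : IsFundUnit (Qsqrt (2 * p * q)) ((x : ℝ) + (y : ℝ) * Real.sqrt (2 * p * q)))
    (hnorm : x ^ 2 - 2 * p * q * y ^ 2 = 1) :
    p % 8 = 1 ∧ ¬ ∃ n : ℕ, 2 * (p : ℤ) * (x - 1) = (n : ℤ) ^ 2 := by
  have hp2 := hp.two_le
  have hq2 := hq.two_le
  have hpodd : p % 2 = 1 := by omega
  have hqodd : q % 2 = 1 := by omega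
  -- ### Part 1 : p % 8 = 1
  have part1 : p % 8 = 1 := by
    -- rewrite the square root in a `ℕ`-cast form
    have hcast : (2 * (p : ℝ)) = ((2 * p : ℕ) : ℝ) := by push_cast; ring
    rw [hcast] at hε2p
    set s : ℝ := Real.sqrt ((2 * p : ℕ) : ℝ) with hsdef
    have hs2 : s ^ 2 = ((2 * p : ℕ) : ℝ) := Real.sq_sqrt (by positivity)
    have hs2' : s ^ 2 = 2 * (p : ℝ) := by rw [hs2]; push_cast; ring
    have hspos : 0 < s := Real.sqrt_pos.mpr (by exact_mod_cast (by omega : 0 < 2 * p))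
    have hε1 : 1 < (u : ℝ) + (v : ℝ) * s := hε2p.2.1
    have hεpos : 0 < (u : ℝ) + (v : ℝ) * s := by linarith
    have hzr : ((u : ℝ)) ^ 2 - 2 * (p : ℝ) * (v : ℝ) ^ 2 = 1 := by exact_mod_cast hnorm2p
    have hprod : ((u : ℝ) + (v : ℝ) * s) * ((u : ℝ) - (v : ℝ) * s) = 1 := by
      linear_combination hzr - (v : ℝ) ^ 2 * hs2'
    have hinvlt : (u : ℝ) - (v : ℝ) * s < 1 := by nlinarith
    have hinvpos : 0 < (u : ℝ) - (v : ℝ) * s := by nlinarith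
    have hupos : (0 : ℤ) < u := by
      have : (0 : ℝ) < (u : ℝ) := by nlinarith
      exact_mod_cast this
    have hvpos : (0 : ℤ) < v := by
      have hvs : 0 < (v : ℝ) * s := by nlinarith
      have : (0 : ℝ) < (v : ℝ) := by
        by_contra hcon
        push_neg at hcon
        nlinarith
      exact_mod_cast this
    lift u to ℕ using hupos.le with U
    lift v to ℕ using hvpos.le with V
    have hUV : U ^ 2 = 2 * p * V ^ 2 + 1 := by
      have : (U : ℤ) ^ 2 = 2 * p * (V : ℤ) ^ 2 + 1 := by linarith [hnorm2p]
      exact_mod_cast this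
    have hV1 : 1 ≤ V := by exact_mod_cast hvpos
    obtain ⟨k, Z, hk1, hZ1, hXk, hYZ, hkk⟩ := split_pell hpodd hV1 hp2 hUV
    have hcop := cop_succ k
    -- useful: U = 2k+1, V = 2Z
    by_contra hp8
    have hp85 : p % 8 = 5 := by omega
    rcases peel Nat.prime_two hcop hkk with ⟨A1, hA1, h1, hc1⟩ | ⟨B1, hB1, h1, hc1⟩
    · rcases peel hp hc1 h1 with ⟨A2, hA2, h2, hc2⟩ | ⟨B2, hB2, h2, hc2⟩
      · -- k = 2p a², k+1 = b² : ε is a square of a unit, contradiction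
        obtain ⟨a, b, ha, hb⟩ := cop_sq hc2 h2
        have hZab : Z = a * b := by
          refine Nat.pow_left_injective (by norm_num : (2 : ℕ) ≠ 0) ?_
          show Z ^ 2 = (a * b) ^ 2
          rw [mul_pow, ← ha, ← hb, h2]
        have hbpos : 0 < b := Nat.pos_of_ne_zero (by rintro rfl; simp at hb)
        have hknat : k = 2 * (p * a ^ 2) := by rw [hA1, hA2, ha]
        have hbnat : b ^ 2 = 2 * (p * a ^ 2) + 1 := by omega
        refine fund_no_sqrt (2 * p) _ hε2p b a hbpos (Or.inl ?_) ?_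
        · have : (b : ℤ) ^ 2 = 2 * ((p : ℤ) * (a : ℤ) ^ 2) + 1 := by exact_mod_cast hbnat
          push_cast
          linarith
        · have hUnat : U = b ^ 2 + 2 * (p * a ^ 2) := by omega
          have hVnat : V = 2 * (a * b) := by omega
          have hseq : Real.sqrt ((2 * p : ℕ) : ℝ) = s := rfl
          rw [hseq, hUnat, hVnat]
          push_cast
          linear_combination (a : ℝ) ^ 2 * hs2'
      · -- k = 2a², k+1 = p b² : impossible mod 8
        obtain ⟨a, b, ha, hb⟩ := cop_sq hc2 h2
        have hknat : k = 2 * a ^ 2 := by rw [hA1, ha]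
        have hk1nat : k + 1 = p * b ^ 2 := by rw [hB2, hb]
        have hbodd : b % 2 = 1 := by
          rcases Nat.even_or_odd b with ⟨t, rfl⟩ | hO
          · exfalso
            have h4 : p * (t + t) ^ 2 = 4 * (p * t ^ 2) := by ring
            omega
          · exact Nat.odd_iff.mp hO
        have hb8 := odd_sq_mod8 b hbodd
        have hm8 : (p * b ^ 2) % 8 = 5 := by
          rw [Nat.mul_mod, hp85, hb8]
        have := sq_mod4 a
        omega
    · rcases peel hp hc1 h1 with ⟨A2, hA2, h2, hc2⟩ | ⟨B2, hB2, h2, hc2⟩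
      · -- k = p a², k+1 = 2b² : impossible mod 8
        obtain ⟨a, b, ha, hb⟩ := cop_sq hc2 h2
        have hknat : k = p * a ^ 2 := by rw [hA2, ha]
        have hk1nat : k + 1 = 2 * b ^ 2 := by rw [hB1, hb]
        have haodd : a % 2 = 1 := by
          rcases Nat.even_or_odd a with ⟨t, rfl⟩ | hO
          · exfalso
            have h4 : p * (t + t) ^ 2 = 4 * (p * t ^ 2) := by ring
            omega
          · exact Nat.odd_iff.mp hO
        have ha8 := odd_sq_mod8 a haodd
        have hm8 : (p * a ^ 2) % 8 = 5 := by
          rw [Nat.mul_mod, hp85, ha8]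
        have := sq_mod4 b
        omega
      · -- k = a², k+1 = 2p b² : ε is a square of a unit, contradiction
        obtain ⟨a, b, ha, hb⟩ := cop_sq hc2 h2
        have hZab : Z = a * b := by
          refine Nat.pow_left_injective (by norm_num : (2 : ℕ) ≠ 0) ?_
          show Z ^ 2 = (a * b) ^ 2
          rw [mul_pow, ← ha, ← hb, h2]
        have hknat : k = a ^ 2 := ha
        have hk1nat : k + 1 = 2 * (p * b ^ 2) := by rw [hB1, hB2, hb]
        have hapos : 0 < a := Nat.pos_of_ne_zero (by rintro rfl; simp at ha; omega)
        refine fund_no_sqrt (2 * p) _ hε2p a b hapos (Or.inr ?_) ?_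
        · have hanat : a ^ 2 + 1 = 2 * (p * b ^ 2) := by omega
          have : (a : ℤ) ^ 2 + 1 = 2 * ((p : ℤ) * (b : ℤ) ^ 2) := by exact_mod_cast hanat
          push_cast
          linarith
        · have hUnat : U = a ^ 2 + 2 * (p * b ^ 2) := by omega
          have hVnat : V = 2 * (a * b) := by omega
          have hseq : Real.sqrt ((2 * p : ℕ) : ℝ) = s := rfl
          rw [hseq, hUnat, hVnat]
          push_cast
          linear_combination (b : ℝ) ^ 2 * hs2'
  refine ⟨part1, ?_⟩
  -- ### Part 2
  rintro ⟨n, hn⟩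
  lift x to ℕ using hx.le with X
  lift y to ℕ using hy.le with Y
  have hXY : X ^ 2 = 2 * (p * q) * Y ^ 2 + 1 := by
    have : (X : ℤ) ^ 2 = 2 * ((p : ℤ) * q) * (Y : ℤ) ^ 2 + 1 := by linarith [hnorm]
    exact_mod_cast this
  have hY1 : 1 ≤ Y := by exact_mod_cast hy
  have hpq2 : 2 ≤ p * q := le_trans hp2 (Nat.le_mul_of_pos_right p (by omega))
  have hpqodd : (p * q) % 2 = 1 := Nat.odd_mul_odd hpodd hqodd
  obtain ⟨k, Z, hk1, hZ1, hXk, hYZ, hkk⟩ := split_pell hpqodd hY1 hpq2 hXY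
  have hcop := cop_succ k
  -- from the square hypothesis : k = p * a₀²
  have hnnat : 4 * (p * k) = n ^ 2 := by
    have hz : 4 * ((p : ℤ) * k) = (n : ℤ) ^ 2 := by
      rw [← hn, hXk]; push_cast; ring
    exact_mod_cast hz
  have hneven : n % 2 = 0 := by
    rcases Nat.even_or_odd n with hE | ⟨t, rfl⟩
    · exact Nat.even_iff.mp hE
    · exfalso
      have : (2 * t + 1) ^ 2 = 4 * (t * (t + 1)) + 1 := by ring
      omega
  obtain ⟨m, rfl⟩ : ∃ m, n = 2 * m := ⟨n / 2, by omega⟩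
  have hpk : p * k = m ^ 2 := by
    have : (2 * m) ^ 2 = 4 * m ^ 2 := by ring
    omega
  have hpdvd : p ∣ m := hp.dvd_of_dvd_pow (⟨k, hpk.symm⟩ : p ∣ m ^ 2)
  obtain ⟨a0, rfl⟩ := hpdvd
  have hka : k = p * a0 ^ 2 := by
    have h4 : (p * a0) ^ 2 = p * (p * a0 ^ 2) := by ring
    rw [h4] at hpk
    exact Nat.eq_of_mul_eq_mul_left hp.pos hpk
  have hpk' : p ∣ k := ⟨a0 ^ 2, hka⟩
  have ha0pos : 0 < a0 := by
    rcases Nat.eq_zero_or_pos a0 with rfl | h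
    · simp at hka; omega
    · exact h
  have hq3 : 3 ≤ q := by omega
  have hqn2 : ¬ q ∣ 2 := fun hd => by have := Nat.le_of_dvd (by norm_num) hd; omega
  have hqn1 : ¬ q ∣ 1 := fun hd => by have := Nat.le_of_dvd (by norm_num) hd; omega
  have h2n1 : ¬ (2 : ℕ) ∣ 1 := by norm_num
  -- rewrite   k(k+1) = 2(p(q Z²))
  have hkk' : k * (k + 1) = 2 * (p * (q * Z ^ 2)) := by rw [hkk]; ring
  -- p must divide the k-side in every peel
  have hpnk1 : ¬ p ∣ (k + 1) := by
    intro hd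
    have h1 : p ∣ 1 := hcop ▸ Nat.dvd_gcd hpk' hd
    have := Nat.le_of_dvd one_pos h1
    have := hp.two_le
    omega
  rcases peel Nat.prime_two hcop hkk' with ⟨A1, hA1, h1, hc1⟩ | ⟨B1, hB1, h1, hc1⟩
  · rcases peel hp hc1 h1 with ⟨A2, hA2, h2, hc2⟩ | ⟨B2, hB2, h2, hc2⟩
    · rcases peel hq hc2 h2 with ⟨A3, hA3, h3, hc3⟩ | ⟨B3, hB3, h3, hc3⟩
      · -- k = 2pq a² and k = p a₀² : a₀² = 2q a², impossible
        obtain ⟨a, b, ha, hb⟩ := cop_sq hc3 h3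
        have : p * a0 ^ 2 = p * (q * (2 * a ^ 2)) := by
          rw [← hka, hA1, hA2, hA3, ha]; ring
        have heq : a0 ^ 2 = q * (2 * a ^ 2) := Nat.eq_of_mul_eq_mul_left hp.pos this
        have : a0 = 0 := notsq (b := a) hq hqn2 (by rw [heq]; ring)
        omega
      · -- k = 2p a², k+1 = q b² : a₀² = 2 a², impossible
        obtain ⟨a, b, ha, hb⟩ := cop_sq hc3 h3
        have : p * a0 ^ 2 = p * (2 * (1 * a ^ 2)) := by
          rw [← hka, hA1, hA2, ha]; ring
        have heq : a0 ^ 2 = 2 * (1 * a ^ 2) := Nat.eq_of_mul_eq_mul_left hp.pos this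
        have : a0 = 0 := notsq (b := a) Nat.prime_two h2n1 (by rw [heq]; ring)
        omega
    · exact absurd ⟨B2, hB2⟩ hpnk1
  · rcases peel hp hc1 h1 with ⟨A2, hA2, h2, hc2⟩ | ⟨B2, hB2, h2, hc2⟩
    · rcases peel hq hc2 h2 with ⟨A3, hA3, h3, hc3⟩ | ⟨B3, hB3, h3, hc3⟩
      · -- k = pq a², k+1 = 2 b² : a₀² = q a², impossible
        obtain ⟨a, b, ha, hb⟩ := cop_sq hc3 h3
        have : p * a0 ^ 2 = p * (q * (1 * a ^ 2)) := by
          rw [← hka, hA2, hA3, ha]; ring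
        have heq : a0 ^ 2 = q * (1 * a ^ 2) := Nat.eq_of_mul_eq_mul_left hp.pos this
        have : a0 = 0 := notsq (b := a) hq hqn1 (by rw [heq]; ring)
        omega
      · -- k = p a², k+1 = 2q b² : impossible mod 8 since p ≡ 1, q ≡ 3
        obtain ⟨a, b, ha, hb⟩ := cop_sq hc3 h3
        have hknat : k = p * a ^ 2 := by rw [hA2, ha]
        have hk1nat : k + 1 = 2 * (q * b ^ 2) := by rw [hB1, hB3, hb]
        have haodd : a % 2 = 1 := by
          rcases Nat.even_or_odd a with ⟨t, rfl⟩ | hO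
          · exfalso
            have h4 : p * (t + t) ^ 2 = 4 * (p * t ^ 2) := by ring
            omega
          · exact Nat.odd_iff.mp hO
        have ha8 := odd_sq_mod8 a haodd
        have hpa8 : (p * a ^ 2) % 8 = 1 := by
          rw [Nat.mul_mod, part1, ha8]
        -- so k ≡ 1 mod 8, k+1 ≡ 2 mod 8, but q b² ≢ 1 mod 4
        rcases Nat.even_or_odd b with ⟨t, rfl⟩ | hO
        · have h4 : (t + t) ^ 2 = 4 * t ^ 2 := by ring
          have hb4 : (t + t) ^ 2 % 4 = 0 := by omega
          have hqb4 : (q * (t + t) ^ 2) % 4 = 0 := by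
            rw [Nat.mul_mod, hb4, Nat.mul_zero, Nat.zero_mod]
          omega
        · have hbodd : b % 2 = 1 := Nat.odd_iff.mp hO
          have hb8 := odd_sq_mod8 b hbodd
          have hb4 : b ^ 2 % 4 = 1 := by omega
          have hqb4 : (q * b ^ 2) % 4 = 3 := by
            rw [Nat.mul_mod, hq4, hb4]
          omega
    · exact hpnk1 ⟨2 * B2, by rw [hB1, hB2]; ring⟩
end

section
/- Write ε_{pq} = a + b√(pq) for the fundamental unit of ℚ(√(pq)). If one of a+1, a−1 is the square of a natural number, then p ≡ 1 (mod 8). -/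
open IntermediateField

/-- valuation-parity lemma: if `n² * t = p * q * c²` with `p ∤ n²·(stuff)`... -/
lemma keylem {p q n t c : ℕ} (hp : p.Prime) (hq : q.Prime) (hpq : p ≠ q)
    (ht : t ≠ 0) (hc : c ≠ 0) (heq : n ^ 2 * t = p * q * c ^ 2) : p ∣ t := by
  by_contra h
  have hpqc : p * q * c ^ 2 ≠ 0 :=
    Nat.mul_ne_zero (Nat.mul_ne_zero hp.pos.ne' hq.pos.ne') (pow_ne_zero 2 hc)
  have hn : n ≠ 0 := by
    rintro rfl
    exact hpqc (by simpa using heq.symm)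
  have hpq0 : p * q ≠ 0 := Nat.mul_ne_zero hp.pos.ne' hq.pos.ne'
  have := congrArg (fun m => m.factorization p) heq
  simp only [Nat.factorization_mul (pow_ne_zero 2 hn) ht,
    Nat.factorization_mul hpq0 (pow_ne_zero 2 hc),
    Nat.factorization_mul hp.ne_zero hq.ne_zero,
    Nat.factorization_pow, Finsupp.add_apply, Finsupp.smul_apply, smul_eq_mul] at this
  have h1 : t.factorization p = 0 := Nat.factorization_eq_zero_of_not_dvd h
  have h2 : p.factorization p = 1 := Nat.Prime.factorization_self hp
  have h3 : q.factorization p = 0 :=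
    Nat.factorization_eq_zero_of_not_dvd (fun hd => hpq ((Nat.prime_dvd_prime_iff_eq hp hq).1 hd))
  omega

lemma twoval {t : ℕ} (h : t % 4 = 2) : t.factorization 2 = 1 := by
  obtain ⟨m, rfl⟩ : ∃ m, t = 2 * m := ⟨t / 2, by omega⟩
  have hm : ¬ (2 ∣ m) := by omega
  have hm0 : m ≠ 0 := by omega
  rw [Nat.factorization_mul (by norm_num) hm0]
  simp [Nat.Prime.factorization_self Nat.prime_two,
    Nat.factorization_eq_zero_of_not_dvd hm]

theorem stmt15 (p q : ℕ) (hp : p.Prime) (hq : q.Prime) (hpq : p ≠ q)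
    (hp4 : p % 4 = 1) (hq4 : q % 4 = 3)
    (a b : ℤ) (ha : 0 < a) (hb : 0 < b)
    (hεpq : IsFundUnit (Qsqrt (p * q)) ((a : ℝ) + (b : ℝ) * Real.sqrt (p * q)))
    (hnormpq : a ^ 2 - p * q * b ^ 2 = 1)
    (hsq : (∃ n : ℕ, a + 1 = (n : ℤ) ^ 2) ∨ (∃ n : ℕ, a - 1 = (n : ℤ) ^ 2)) :
    p % 8 = 1 := by
  haveI : Fact p.Prime := ⟨hp⟩
  have hp2 : p ≠ 2 := by omega
  have hpge : 2 ≤ p := hp.two_le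
  have hqge : 2 ≤ q := hq.two_le
  -- a ≥ 2
  have ha2 : 2 ≤ a := by
    by_contra h
    have ha1 : a = 1 := by omega
    rw [ha1] at hnormpq
    have hb2 : (0:ℤ) < (p:ℤ) * q * b ^ 2 := by
      have hp0 : (0:ℤ) < (p:ℤ) := by exact_mod_cast hp.pos
      have hq0 : (0:ℤ) < (q:ℤ) := by exact_mod_cast hq.pos
      positivity
    nlinarith
  -- natural number versions
  set A := a.toNat with hA
  set B := b.toNat with hB
  have haA : (A : ℤ) = a := Int.toNat_of_nonneg ha.le
  have hbB : (B : ℤ) = b := Int.toNat_of_nonneg hb.le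
  have hA2 : 2 ≤ A := by omega
  have hB1 : 1 ≤ B := by omega
  have heqZ : ((A + 1) * (A - 1) : ℕ) = (p * q * B ^ 2 : ℕ) := by
    have : ((A + 1) * (A - 1) : ℤ) = (p * q * B ^ 2 : ℤ) := by
      rw [haA, hbB]; ring_nf; linarith [hnormpq]
    have hcast : (((A + 1) * (A - 1) : ℕ) : ℤ) = ((A + 1) * (A - 1) : ℤ) := by
      push_cast [Nat.cast_sub (by omega : 1 ≤ A)]; ring
    exact_mod_cast hcast.trans this
  have hB0 : B ^ 2 ≠ 0 := by positivity
  have hAm0 : A - 1 ≠ 0 := by omega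
  have hAp0 : A + 1 ≠ 0 := by omega
  -- translate hsq
  have hsqN : (∃ n : ℕ, A + 1 = n ^ 2) ∨ (∃ n : ℕ, A - 1 = n ^ 2) := by
    rcases hsq with ⟨n, hn⟩ | ⟨n, hn⟩
    · left; exact ⟨n, by have : (A : ℤ) + 1 = (n : ℤ) ^ 2 := by rw [haA]; exact hn
                         exact_mod_cast this⟩
    · right; refine ⟨n, ?_⟩
      have : ((A - 1 : ℕ) : ℤ) = (n : ℤ) ^ 2 := by
        rw [Nat.cast_sub (by omega : 1 ≤ A), haA]; exact_mod_cast hn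
      exact_mod_cast this
  -- A must be even
  have hAeven : A % 2 = 0 := by
    by_contra hodd
    -- A odd; the square factor among A±1 is ≡ 0 mod 4, the other ≡ 2 mod 4
    have key : ∀ n s t : ℕ, s = n ^ 2 → s * t = p * q * B ^ 2 → t % 4 = 2 → False := by
      intro n s t hs hst ht4
      have ht0 : t ≠ 0 := by omega
      have hpqB : p * q * B ^ 2 ≠ 0 :=
        Nat.mul_ne_zero (Nat.mul_ne_zero hp.pos.ne' hq.pos.ne') hB0
      have hn0 : n ≠ 0 := by
        rintro rfl
        rw [hs] at hst
        exact hpqB (by simpa using hst.symm)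
      have := congrArg (fun m => m.factorization 2) hst
      have hpq0 : p * q ≠ 0 := Nat.mul_ne_zero hp.pos.ne' hq.pos.ne'
      simp only [hs, Nat.factorization_mul (pow_ne_zero 2 hn0) ht0,
        Nat.factorization_mul hpq0 hB0,
        Nat.factorization_mul hp.ne_zero hq.ne_zero,
        Nat.factorization_pow, Finsupp.add_apply, Finsupp.smul_apply, smul_eq_mul] at this
      have h1 : t.factorization 2 = 1 := twoval ht4
      have h2 : p.factorization 2 = 0 := Nat.factorization_eq_zero_of_not_dvd (by omega)
      have h3 : q.factorization 2 = 0 := Nat.factorization_eq_zero_of_not_dvd (by omega)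
      omega
    rcases hsqN with ⟨n, hn⟩ | ⟨n, hn⟩
    · -- A+1 = n², A odd, so n even, 4 ∣ A+1, A-1 ≡ 2 mod 4
      have hne : n % 2 = 0 := by
        by_contra h
        have hodd' : Odd (n * n) := (Nat.odd_iff.2 (by omega)).mul (Nat.odd_iff.2 (by omega))
        have h1 : (n * n) % 2 = 1 := Nat.odd_iff.1 hodd'
        have hnn : n * n = n ^ 2 := by ring
        omega
      have h4 : (A + 1) % 4 = 0 := by
        obtain ⟨m, rfl⟩ : ∃ m, n = 2 * m := ⟨n / 2, by omega⟩
        obtain ⟨k, hk⟩ : ∃ k, A + 1 = 4 * k := ⟨m ^ 2, by rw [hn]; ring⟩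
        omega
      exact key n (A + 1) (A - 1) hn heqZ (by omega)
    · have hne : n % 2 = 0 := by
        by_contra h
        have hodd' : Odd (n * n) := (Nat.odd_iff.2 (by omega)).mul (Nat.odd_iff.2 (by omega))
        have h1 : (n * n) % 2 = 1 := Nat.odd_iff.1 hodd'
        have hnn : n * n = n ^ 2 := by ring
        omega
      have h4 : (A - 1) % 4 = 0 := by
        obtain ⟨m, rfl⟩ : ∃ m, n = 2 * m := ⟨n / 2, by omega⟩
        obtain ⟨k, hk⟩ : ∃ k, A - 1 = 4 * k := ⟨m ^ 2, by rw [hn]; ring⟩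
        omega
      exact key n (A - 1) (A + 1) hn (by rw [mul_comm]; exact heqZ) (by omega)
  -- main case split
  rcases hsqN with ⟨n, hn⟩ | ⟨n, hn⟩
  · -- A+1 = n², get p ∣ A-1, hence n² ≡ 2 mod p
    have hdvd : p ∣ A - 1 :=
      keylem hp hq hpq hAm0 (by omega : B ≠ 0) (by rw [← hn]; exact heqZ)
    have hsq2 : IsSquare (2 : ZMod p) := by
      refine ⟨(n : ZMod p), ?_⟩
      have h0 : ((A - 1 : ℕ) : ZMod p) = 0 := (ZMod.natCast_eq_zero_iff _ _).2 hdvd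
      have hA1 : (A : ℕ) = (A - 1) + 1 := by omega
      have : ((n : ZMod p)) ^ 2 = ((A + 1 : ℕ) : ZMod p) := by rw [hn]; push_cast; ring
      rw [← pow_two, this, hA1]
      push_cast [h0]; ring
    have := (ZMod.exists_sq_eq_two_iff hp2).1 hsq2
    omega
  · -- A-1 = n², get p ∣ A+1, hence n² ≡ -2 mod p
    have hdvd : p ∣ A + 1 :=
      keylem hp hq hpq hAp0 (by omega : B ≠ 0) (by rw [← hn, mul_comm]; exact heqZ)
    have hsq2 : IsSquare (-2 : ZMod p) := by
      refine ⟨(n : ZMod p), ?_⟩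
      have h0 : ((A + 1 : ℕ) : ZMod p) = 0 := (ZMod.natCast_eq_zero_iff _ _).2 hdvd
      have : ((n : ZMod p)) ^ 2 = ((A - 1 : ℕ) : ZMod p) := by rw [hn]; push_cast; ring
      have h2 : ((A - 1 : ℕ) : ZMod p) = ((A + 1 : ℕ) : ZMod p) - 2 := by
        have hA1 : (A + 1 : ℕ) = (A - 1) + 2 := by omega
        rw [hA1]; push_cast; ring
      rw [← pow_two, this, h2, h0]; ring
    have := (ZMod.exists_sq_eq_neg_two_iff hp2).1 hsq2
    omega
end

section
/- Suppose moreover that p ≡ 1 (mod 8), q ≡ 3 (mod 8) and the Legendre symbol (p/q) = −1. Then x − 1 is the square of a natural number, and a − 1 is the square of a natural number, where ε_{2pq} = x + y√(2pq) and ε_{pq} = a + b√(pq) are the fundamental units of ℚ(√(2pq)) and ℚ(√(pq)) respectively. -/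
open IntermediateField

open Polynomial in
lemma sqrtNatIntegral (D : ℕ) : IsIntegral ℤ (Real.sqrt D) := by
  refine ⟨X ^ 2 - C (D : ℤ), monic_X_pow_sub_C _ (by norm_num), ?_⟩
  simp [Real.sq_sqrt (by positivity : (0:ℝ) ≤ (D:ℝ))]

lemma quadIntegral (D : ℕ) (m n : ℤ) : IsIntegral ℤ ((m:ℝ) + (n:ℝ) * Real.sqrt D) := by
  have h1 : ∀ k : ℤ, IsIntegral ℤ ((k:ℝ)) := fun k => by
    simpa using isIntegral_algebraMap (R := ℤ) (A := ℝ) (x := k)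
  exact (h1 m).add ((h1 n).mul (sqrtNatIntegral D))

lemma isUnitOf_quad (D : ℕ) (α β e : ℤ) (he : e = 1 ∨ e = -1)
    (hn : α^2 - D * β^2 = e) (hpos : 0 < (α:ℝ) + (β:ℝ) * Real.sqrt D) :
    IsUnitOf (Qsqrt D) ((α:ℝ) + (β:ℝ) * Real.sqrt D) := by
  have hsq : Real.sqrt (D:ℝ) ^ 2 = (D:ℝ) := Real.sq_sqrt (by positivity)
  have hcast : (α:ℝ)^2 - (D:ℝ) * (β:ℝ)^2 = (e:ℝ) := by exact_mod_cast congrArg (fun z : ℤ => (z:ℝ)) hn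
  have he2 : (e:ℝ) * e = 1 := by rcases he with rfl | rfl <;> norm_num
  refine ⟨?_, ne_of_gt hpos, quadIntegral D α β, ?_⟩
  · exact add_mem (IntermediateField.intCast_mem _ α)
      (mul_mem (IntermediateField.intCast_mem _ β)
        (IntermediateField.subset_adjoin ℚ _ rfl))
  · have key : ((α:ℝ) + (β:ℝ) * Real.sqrt D) * (((e*α : ℤ):ℝ) + ((-(e*β) : ℤ):ℝ) * Real.sqrt D) = 1 := by
      push_cast
      linear_combination (e:ℝ) * hcast - (e:ℝ) * (β:ℝ)^2 * hsq + he2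
    rw [inv_eq_of_mul_eq_one_right key]
    exact quadIntegral D (e*α) (-(e*β))

lemma not_sq_fund {K : IntermediateField ℚ ℝ} {ε η : ℝ} (hf : IsFundUnit K ε)
    (hη : IsUnitOf K η) (hpos : 0 < η) (hsq : η ^ 2 = ε) : False := by
  have hε1 : 1 < ε := hf.2.1
  have hεpos : (0:ℝ) < ε := lt_trans zero_lt_one hε1
  obtain ⟨n, h | h⟩ := hf.2.2 η hη
  · have h2 : ε ^ (n + n) = ε ^ (1:ℤ) := by
      rw [zpow_add₀ (ne_of_gt hεpos), zpow_one, ← h, ← hsq]; ring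
    have := zpow_right_injective₀ hεpos (ne_of_gt hε1) h2
    omega
  · have : (0:ℝ) < ε ^ n := zpow_pos hεpos n
    rw [h] at hpos; linarith

lemma fund_sq_contra (D : ℕ) (X Y s t : ℤ) (hs : 0 < s) (ht : 0 < t)
    (hfund : IsFundUnit (Qsqrt D) ((X:ℝ) + (Y:ℝ) * Real.sqrt (D:ℝ)))
    (hX : X = s^2 + D * t^2) (hY : Y = 2*s*t)
    (he : s^2 - D * t^2 = 1 ∨ s^2 - D * t^2 = -1) : False := by
  have hsq : Real.sqrt (D:ℝ) ^ 2 = (D:ℝ) := Real.sq_sqrt (by positivity)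
  have hs' : (0:ℝ) < (s:ℝ) := by exact_mod_cast hs
  have ht' : (0:ℝ) < (t:ℝ) := by exact_mod_cast ht
  have hpos : 0 < (s:ℝ) + (t:ℝ) * Real.sqrt (D:ℝ) := by positivity
  refine not_sq_fund hfund (isUnitOf_quad D s t (s^2 - D*t^2) he rfl hpos) hpos ?_
  subst hX hY
  push_cast
  linear_combination ((t:ℝ)^2) * hsq

lemma zmod_ns_contra {r : ℕ} [Fact r.Prime] {c d sz : ℤ}
    (h : ((c:ℤ) : ZMod r) * ((sz:ℤ) : ZMod r)^2 = ((d:ℤ) : ZMod r))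
    (hns : ¬ IsSquare ((c * d : ℤ) : ZMod r)) : False := by
  apply hns
  refine ⟨(c : ZMod r) * (sz : ZMod r), ?_⟩
  push_cast
  rw [← h]; ring

lemma eq_of_sq_eq_sq {y z : ℤ} (hy : 0 ≤ y) (hz : 0 ≤ z) (h : y^2 = z^2) : y = z := by
  have h2 : (y - z) * (y + z) = 0 := by linear_combination h
  rcases mul_eq_zero.mp h2 with h3 | h3 <;> omega

lemma split_sq {u v w : ℤ} (hu : 0 < u) (hv : 0 < v) (co : IsCoprime u v) {A B : ℤ}
    (hA : 0 < A) (hB : 0 < B) (hAu : A ∣ u) (hBv : B ∣ v)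
    (hw : u * v = A * B * w^2) : ∃ s t : ℤ, u = A * s^2 ∧ v = B * t^2 := by
  obtain ⟨u₁, rfl⟩ := hAu
  obtain ⟨v₁, rfl⟩ := hBv
  have h1 : u₁ * v₁ = w^2 := by
    have h2 : A * B * (u₁ * v₁) = A * B * w^2 := by linear_combination hw
    exact mul_left_cancel₀ (by positivity) h2
  have co1 : IsCoprime u₁ v₁ := (co.of_mul_left_right).of_mul_right_right
  obtain ⟨s, hs⟩ := Int.sq_of_isCoprime co1 h1
  obtain ⟨t, ht⟩ := Int.sq_of_isCoprime co1.symm (by rw [mul_comm]; exact h1)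
  have hu1 : 0 < u₁ := by nlinarith
  have hv1 : 0 < v₁ := by nlinarith
  refine ⟨s, t, ?_, ?_⟩
  · rcases hs with hs | hs
    · rw [hs]
    · exfalso; nlinarith [sq_nonneg s]
  · rcases ht with ht | ht
    · rw [ht]
    · exfalso; nlinarith [sq_nonneg t]

lemma bad_case {r : ℕ} [Fact r.Prime] (c d sz : ℤ)
    (h : ((c:ℤ) : ZMod r) * ((sz:ℤ) : ZMod r)^2 = ((d:ℤ) : ZMod r))
    (hL : legendreSym r (c*d) = -1) : False :=
  zmod_ns_contra h ((legendreSym.eq_neg_one_iff (p := r)).mp hL)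

theorem stmt18 (p q : ℕ) (hp : p.Prime) (hq : q.Prime) (hpq : p ≠ q)
    (hp4 : p % 4 = 1) (hq4 : q % 4 = 3)
    (hp8 : p % 8 = 1) (hq8 : q % 8 = 3)
    (hleg : @legendreSym q ⟨hq⟩ p = -1)
    (x y : ℤ) (hx : 0 < x) (hy : 0 < y)
    (hfund : IsFundUnit (Qsqrt (2 * p * q)) ((x : ℝ) + (y : ℝ) * Real.sqrt (2 * p * q)))
    (hnorm : x ^ 2 - 2 * p * q * y ^ 2 = 1)
    (a b : ℤ) (ha : 0 < a) (hb : 0 < b)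
    (hεpq : IsFundUnit (Qsqrt (p * q)) ((a : ℝ) + (b : ℝ) * Real.sqrt (p * q)))
    (hnormpq : a ^ 2 - p * q * b ^ 2 = 1) :
    (∃ n : ℕ, x - 1 = (n : ℤ) ^ 2) ∧ (∃ m : ℕ, a - 1 = (m : ℤ) ^ 2) := by
  haveI fp : Fact p.Prime := ⟨hp⟩
  haveI fq : Fact q.Prime := ⟨hq⟩
  have hp2 : p ≠ 2 := by rintro rfl; omega
  have hq2 : q ≠ 2 := by rintro rfl; omega
  have hppos : (0:ℤ) < (p:ℤ) := by exact_mod_cast hp.pos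
  have hqpos : (0:ℤ) < (q:ℤ) := by exact_mod_cast hq.pos
  have hPQ : (0:ℤ) < (p:ℤ)*(q:ℤ) := mul_pos hppos hqpos
  have h2P : (0:ℤ) < 2*(p:ℤ) := by linarith
  have h2Q : (0:ℤ) < 2*(q:ℤ) := by linarith
  have h2PQ : (0:ℤ) < 2*(p:ℤ)*(q:ℤ) := mul_pos h2P hqpos
  -- Legendre facts
  have Lqp : legendreSym q ((p:ℕ):ℤ) = -1 := hleg
  have Lq2 : legendreSym q 2 = -1 := by
    apply (legendreSym.eq_neg_one_iff (p := q)).mpr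
    rw [show (((2:ℤ)):ZMod q) = (2:ZMod q) by push_cast; ring,
      ZMod.exists_sq_eq_two_iff hq2]
    omega
  have Lqm1 : legendreSym q (-1) = -1 := by
    apply (legendreSym.eq_neg_one_iff (p := q)).mpr
    rw [show (((-1:ℤ)):ZMod q) = (-1:ZMod q) by push_cast; ring,
      ZMod.exists_sq_eq_neg_one_iff]
    omega
  have Lpq : legendreSym p ((q:ℕ):ℤ) = -1 :=
    (legendreSym.quadratic_reciprocity_one_mod_four hp4 hq2).symm.trans hleg
  have Lp2 : legendreSym p 2 = 1 := by
    have h0 : (((2:ℤ)):ZMod p) ≠ 0 := by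
      rw [show (((2:ℤ)):ZMod p) = ((2:ℕ):ZMod p) by push_cast; ring, Ne,
        ZMod.natCast_eq_zero_iff]
      intro hd
      exact hp2 ((Nat.prime_dvd_prime_iff_eq hp Nat.prime_two).mp hd)
    apply (legendreSym.eq_one_iff (p := p) h0).mpr
    rw [show (((2:ℤ)):ZMod p) = (2:ZMod p) by push_cast; ring,
      ZMod.exists_sq_eq_two_iff hp2]
    omega
  have Lpm1 : legendreSym p (-1) = 1 := by
    have h0 : (((-1:ℤ)):ZMod p) ≠ 0 := by
      rw [show (((-1:ℤ)):ZMod p) = (-1:ZMod p) by push_cast; ring]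
      exact neg_ne_zero.mpr one_ne_zero
    apply (legendreSym.eq_one_iff (p := p) h0).mpr
    rw [show (((-1:ℤ)):ZMod p) = (-1:ZMod p) by push_cast; ring,
      ZMod.exists_sq_eq_neg_one_iff]
    omega
  have c2p : IsCoprime (2:ℤ) ((p:ℕ):ℤ) := by
    rw [show (2:ℤ) = ((2:ℕ):ℤ) by norm_num, Nat.isCoprime_iff_coprime]
    exact (Nat.coprime_primes Nat.prime_two hp).mpr (Ne.symm hp2)
  have c2q : IsCoprime (2:ℤ) ((q:ℕ):ℤ) := by
    rw [show (2:ℤ) = ((2:ℕ):ℤ) by norm_num, Nat.isCoprime_iff_coprime]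
    exact (Nat.coprime_primes Nat.prime_two hq).mpr (Ne.symm hq2)
  have cpq : IsCoprime ((p:ℕ):ℤ) ((q:ℕ):ℤ) := by
    rw [Nat.isCoprime_iff_coprime]
    exact (Nat.coprime_primes hp hq).mpr hpq
  have hfund' : IsFundUnit (Qsqrt (2*p*q)) ((x:ℝ) + (y:ℝ) * Real.sqrt (((2*p*q : ℕ)):ℝ)) := by
    rw [show (((2*p*q : ℕ)):ℝ) = 2*(p:ℝ)*(q:ℝ) by push_cast; ring]
    exact hfund
  have hεpq' : IsFundUnit (Qsqrt (p*q)) ((a:ℝ) + (b:ℝ) * Real.sqrt (((p*q : ℕ)):ℝ)) := by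
    rw [show (((p*q : ℕ)):ℝ) = (p:ℝ)*(q:ℝ) by push_cast; ring]
    exact hεpq
  constructor
  · -- the x part
    have hodd2 : Odd (x^2) := ⟨(p:ℤ)*q*y^2, by push_cast; linear_combination hnorm⟩
    have hxodd : Odd x := by
      rcases Int.even_or_odd x with he | ho
      · exact absurd hodd2 (Int.not_odd_iff_even.mpr (Int.even_pow.mpr ⟨he, two_ne_zero⟩))
      · exact ho
    obtain ⟨k, hk⟩ := hxodd
    subst hk
    have hkpos : 0 < k := by
      rcases lt_or_ge 0 k with h | h
      · exact h
      · exfalso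
        have hk0 : k = 0 := by omega
        subst hk0
        have h0 : 2*(p:ℤ)*q*y^2 = 0 := by push_cast at hnorm ⊢; linear_combination -hnorm
        have h1 : (0:ℤ) < 2*(p:ℤ)*q*y^2 := by
          have := mul_pos hy hy
          nlinarith [h2PQ]
        omega
    have hk1pos : 0 < k + 1 := by omega
    have hpqy : (p:ℤ)*q*y^2 = 2*(k*(k+1)) := by
      have h4 : (2:ℤ)*((p:ℤ)*q*y^2) = 2*(2*(k*(k+1))) := by push_cast at hnorm ⊢; linear_combination -hnorm
      exact mul_left_cancel₀ two_ne_zero h4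
    have hyeven : Even y := by
      rcases Int.even_or_odd y with he | ho
      · exact he
      · exfalso
        have hpo : Odd ((p:ℕ):ℤ) := by rw [Int.odd_iff]; omega
        have hqo : Odd ((q:ℕ):ℤ) := by rw [Int.odd_iff]; omega
        have hoo : Odd ((p:ℤ)*q*y^2) := (hpo.mul hqo).mul (ho.pow)
        rw [hpqy] at hoo
        exact (Int.not_odd_iff_even.mpr ⟨k*(k+1), by ring⟩) hoo
    obtain ⟨w, hw⟩ := hyeven
    have hwpos : 0 < w := by omega
    have huvw : k*(k+1) = 2*(p:ℤ)*q*w^2 := by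
      rw [hw] at hpqy
      have h4 : (2:ℤ)*(k*(k+1)) = 2*(2*(p:ℤ)*q*w^2) := by linear_combination -hpqy
      exact mul_left_cancel₀ two_ne_zero h4
    have co : IsCoprime k (k+1) := ⟨-1, 1, by ring⟩
    have h2uv : (2:ℤ) ∣ k*(k+1) := ⟨(p:ℤ)*q*w^2, by linear_combination huvw⟩
    have hpuv : ((p:ℕ):ℤ) ∣ k*(k+1) := ⟨2*(q:ℤ)*w^2, by linear_combination huvw⟩
    have hquv : ((q:ℕ):ℤ) ∣ k*(k+1) := ⟨2*(p:ℤ)*w^2, by linear_combination huvw⟩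
    rcases (Int.prime_two.dvd_mul).mp h2uv with h2 | h2 <;>
      rcases ((Nat.prime_iff_prime_int.mp hp).dvd_mul).mp hpuv with hP | hP <;>
        rcases ((Nat.prime_iff_prime_int.mp hq).dvd_mul).mp hquv with hQ | hQ
    · -- 2,p,q ∣ k
      obtain ⟨s, t, hs, ht⟩ := split_sq (w := w) hkpos hk1pos co (A := 2*((p:ℕ):ℤ)*((q:ℕ):ℤ)) (B := (1:ℤ))
        h2PQ one_pos ((IsCoprime.mul_left c2q cpq).mul_dvd (c2p.mul_dvd h2 hP) hQ) (one_dvd _)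
        (by linear_combination huvw)
      exfalso
      have hs0 : s ≠ 0 := by rintro rfl; simp at hs; omega
      have ht0 : t ≠ 0 := by rintro rfl; simp at ht; omega
      have hw2 : (2*((p:ℕ):ℤ)*((q:ℕ):ℤ)) * w^2 = (2*((p:ℕ):ℤ)*((q:ℕ):ℤ)) * (s*t)^2 := by
        linear_combination (-1)*huvw + (k+1)*hs + (2*((p:ℕ):ℤ)*((q:ℕ):ℤ)*s^2)*ht
      have hw2' : w^2 = (s*t)^2 := mul_left_cancel₀ (by positivity) hw2
      have hwval : w = |s| * |t| := by
        rw [← abs_mul]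
        exact eq_of_sq_eq_sq (le_of_lt hwpos) (abs_nonneg _) (by rw [sq_abs]; exact hw2')
      refine fund_sq_contra (2*p*q) (2*k+1) y |t| |s| (abs_pos.mpr ht0) (abs_pos.mpr hs0) hfund' ?_ ?_ (Or.inl ?_)
      · rw [sq_abs, sq_abs]; push_cast; linear_combination hs + ht
      · rw [hw, hwval]; ring
      · rw [sq_abs, sq_abs]; push_cast; linear_combination hs - ht
    · -- 2,p ∣ k; q ∣ k+1
      obtain ⟨s, t, hs, ht⟩ := split_sq (w := w) hkpos hk1pos co (A := 2*((p:ℕ):ℤ)) (B := ((q:ℕ):ℤ))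
        (h2P) (hqpos) (c2p.mul_dvd h2 hP) (hQ) (by linear_combination huvw)
      exfalso
      have heq : ((q:ℕ):ℤ)*t^2 - (2*((p:ℕ):ℤ))*s^2 = 1 := by linear_combination hs - ht
      refine bad_case (r := q) (-(2*((p:ℕ):ℤ))) 1 s ?_ ?_
      · have h' : ((((q:ℕ):ℤ)*t^2 - (2*((p:ℕ):ℤ))*s^2 : ℤ) : ZMod q) = ((1:ℤ) : ZMod q) := by rw [heq]
        push_cast at h' ⊢
        rw [ZMod.natCast_self] at h'
        linear_combination h'
      · rw [show (-(2*((p:ℕ):ℤ)))*1 = (-1)*(2*((p:ℕ):ℤ)) by ring, legendreSym.mul, legendreSym.mul,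
          Lqm1, Lq2, Lqp]
        norm_num
    · -- 2,q ∣ k; p ∣ k+1
      obtain ⟨s, t, hs, ht⟩ := split_sq (w := w) hkpos hk1pos co (A := 2*((q:ℕ):ℤ)) (B := ((p:ℕ):ℤ))
        (h2Q) (hppos) (c2q.mul_dvd h2 hQ) (hP) (by linear_combination huvw)
      exfalso
      have heq : ((p:ℕ):ℤ)*t^2 - (2*((q:ℕ):ℤ))*s^2 = 1 := by linear_combination hs - ht
      refine bad_case (r := p) (-(2*((q:ℕ):ℤ))) 1 s ?_ ?_
      · have h' : ((((p:ℕ):ℤ)*t^2 - (2*((q:ℕ):ℤ))*s^2 : ℤ) : ZMod p) = ((1:ℤ) : ZMod p) := by rw [heq]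
        push_cast at h' ⊢
        rw [ZMod.natCast_self] at h'
        linear_combination h'
      · rw [show (-(2*((q:ℕ):ℤ)))*1 = (-1)*(2*((q:ℕ):ℤ)) by ring, legendreSym.mul, legendreSym.mul,
          Lpm1, Lp2, Lpq]
        norm_num
    · -- 2 ∣ k; p,q ∣ k+1 : the good case
      obtain ⟨s, t, hs, ht⟩ := split_sq (w := w) hkpos hk1pos co (A := (2:ℤ)) (B := ((p:ℕ):ℤ)*((q:ℕ):ℤ))
        two_pos hPQ h2 (cpq.mul_dvd hP hQ) (by linear_combination huvw)
      refine ⟨(2*s).natAbs, ?_⟩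
      have habs : (((2*s).natAbs : ℤ))^2 = (2*s)^2 := by rw [← Int.abs_eq_natAbs, sq_abs]
      rw [habs]
      linear_combination 2*hs
    · -- p,q ∣ k; 2 ∣ k+1
      obtain ⟨s, t, hs, ht⟩ := split_sq (w := w) hkpos hk1pos co (A := ((p:ℕ):ℤ)*((q:ℕ):ℤ)) (B := (2:ℤ))
        (hPQ) (two_pos) (cpq.mul_dvd hP hQ) (h2) (by linear_combination huvw)
      exfalso
      have heq : (2:ℤ)*t^2 - (((p:ℕ):ℤ)*((q:ℕ):ℤ))*s^2 = 1 := by linear_combination hs - ht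
      refine bad_case (r := q) ((2:ℤ)) 1 t ?_ ?_
      · have h' : (((2:ℤ)*t^2 - (((p:ℕ):ℤ)*((q:ℕ):ℤ))*s^2 : ℤ) : ZMod q) = ((1:ℤ) : ZMod q) := by rw [heq]
        push_cast at h' ⊢
        rw [ZMod.natCast_self] at h'
        linear_combination h'
      · rw [mul_one]
        exact Lq2
    · -- p ∣ k; 2,q ∣ k+1
      obtain ⟨s, t, hs, ht⟩ := split_sq (w := w) hkpos hk1pos co (A := ((p:ℕ):ℤ)) (B := 2*((q:ℕ):ℤ))
        (hppos) (h2Q) (hP) (c2q.mul_dvd h2 hQ) (by linear_combination huvw)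
      exfalso
      have heq : 2*((q:ℕ):ℤ)*t^2 - (((p:ℕ):ℤ))*s^2 = 1 := by linear_combination hs - ht
      refine bad_case (r := p) (2*((q:ℕ):ℤ)) 1 t ?_ ?_
      · have h' : ((2*((q:ℕ):ℤ)*t^2 - (((p:ℕ):ℤ))*s^2 : ℤ) : ZMod p) = ((1:ℤ) : ZMod p) := by rw [heq]
        push_cast at h' ⊢
        rw [ZMod.natCast_self] at h'
        linear_combination h'
      · rw [mul_one, legendreSym.mul, Lp2, Lpq]
        norm_num
    · -- q ∣ k; 2,p ∣ k+1
      obtain ⟨s, t, hs, ht⟩ := split_sq (w := w) hkpos hk1pos co (A := ((q:ℕ):ℤ)) (B := 2*((p:ℕ):ℤ))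
        (hqpos) (h2P) (hQ) (c2p.mul_dvd h2 hP) (by linear_combination huvw)
      exfalso
      have heq : 2*((p:ℕ):ℤ)*t^2 - (((q:ℕ):ℤ))*s^2 = 1 := by linear_combination hs - ht
      refine bad_case (r := p) (-(((q:ℕ):ℤ))) 1 s ?_ ?_
      · have h' : ((2*((p:ℕ):ℤ)*t^2 - (((q:ℕ):ℤ))*s^2 : ℤ) : ZMod p) = ((1:ℤ) : ZMod p) := by rw [heq]
        push_cast at h' ⊢
        rw [ZMod.natCast_self] at h'
        linear_combination h'
      · rw [show (-(((q:ℕ):ℤ)))*1 = (-1)*(((q:ℕ):ℤ)) by ring, legendreSym.mul, Lpm1, Lpq]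
        norm_num
    · -- 2,p,q ∣ k+1
      obtain ⟨s, t, hs, ht⟩ := split_sq (w := w) hkpos hk1pos co (A := (1:ℤ)) (B := 2*((p:ℕ):ℤ)*((q:ℕ):ℤ))
        one_pos h2PQ (one_dvd _) ((IsCoprime.mul_left c2q cpq).mul_dvd (c2p.mul_dvd h2 hP) hQ)
        (by linear_combination huvw)
      exfalso
      have hs0 : s ≠ 0 := by rintro rfl; simp at hs; omega
      have ht0 : t ≠ 0 := by rintro rfl; simp at ht; omega
      have hw2 : (2*((p:ℕ):ℤ)*((q:ℕ):ℤ)) * w^2 = (2*((p:ℕ):ℤ)*((q:ℕ):ℤ)) * (s*t)^2 := by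
        linear_combination (-1)*huvw + (k+1)*hs + (s^2)*ht
      have hw2' : w^2 = (s*t)^2 := mul_left_cancel₀ (by positivity) hw2
      have hwval : w = |s| * |t| := by
        rw [← abs_mul]
        exact eq_of_sq_eq_sq (le_of_lt hwpos) (abs_nonneg _) (by rw [sq_abs]; exact hw2')
      refine fund_sq_contra (2*p*q) (2*k+1) y |s| |t| (abs_pos.mpr hs0) (abs_pos.mpr ht0) hfund' ?_ ?_ (Or.inr ?_)
      · rw [sq_abs, sq_abs]; push_cast; linear_combination hs + ht
      · rw [hw, hwval]; ring
      · rw [sq_abs, sq_abs]; push_cast; linear_combination ht - hs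
  · -- the a part
    rcases Int.even_or_odd a with hae | hao
    · -- a even : the good configuration
      obtain ⟨c, hc⟩ := hae
      have co : IsCoprime (a-1) (a+1) := ⟨c, -(c-1), by rw [hc]; ring⟩
      have hu : 0 < a - 1 := by omega
      have hv : 0 < a + 1 := by omega
      have huv : (a-1)*(a+1) = (p:ℤ)*q*b^2 := by push_cast at hnormpq ⊢; linear_combination hnormpq
      have hpuv : ((p:ℕ):ℤ) ∣ (a-1)*(a+1) := ⟨(q:ℤ)*b^2, by linear_combination huv⟩
      have hquv : ((q:ℕ):ℤ) ∣ (a-1)*(a+1) := ⟨(p:ℤ)*b^2, by linear_combination huv⟩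
      rcases ((Nat.prime_iff_prime_int.mp hp).dvd_mul).mp hpuv with hP | hP <;>
        rcases ((Nat.prime_iff_prime_int.mp hq).dvd_mul).mp hquv with hQ | hQ
      · -- p,q ∣ a-1
        obtain ⟨s, t, hs, ht⟩ := split_sq (w := b) hu hv co (A := ((p:ℕ):ℤ)*((q:ℕ):ℤ)) (B := (1:ℤ))
          (hPQ) (one_pos) (cpq.mul_dvd hP hQ) (one_dvd _) (by linear_combination huv)
        exfalso
        have heq : (1:ℤ)*t^2 - (((p:ℕ):ℤ)*((q:ℕ):ℤ))*s^2 = 2 := by linear_combination hs - ht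
        refine bad_case (r := q) ((1:ℤ)) 2 t ?_ ?_
        · have h' : (((1:ℤ)*t^2 - (((p:ℕ):ℤ)*((q:ℕ):ℤ))*s^2 : ℤ) : ZMod q) = ((2:ℤ) : ZMod q) := by rw [heq]
          push_cast at h' ⊢
          rw [ZMod.natCast_self] at h'
          linear_combination h'
        · rw [one_mul]
          exact Lq2
      · -- p ∣ a-1, q ∣ a+1
        obtain ⟨s, t, hs, ht⟩ := split_sq (w := b) hu hv co (A := ((p:ℕ):ℤ)) (B := ((q:ℕ):ℤ))
          (hppos) (hqpos) (hP) (hQ) (by linear_combination huv)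
        exfalso
        have heq : ((q:ℕ):ℤ)*t^2 - (((p:ℕ):ℤ))*s^2 = 2 := by linear_combination hs - ht
        refine bad_case (r := p) (((q:ℕ):ℤ)) 2 t ?_ ?_
        · have h' : ((((q:ℕ):ℤ)*t^2 - (((p:ℕ):ℤ))*s^2 : ℤ) : ZMod p) = ((2:ℤ) : ZMod p) := by rw [heq]
          push_cast at h' ⊢
          rw [ZMod.natCast_self] at h'
          linear_combination h'
        · rw [show (((q:ℕ):ℤ))*2 = 2*((q:ℕ):ℤ) by ring, legendreSym.mul, Lp2, Lpq]
          norm_num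
      · -- q ∣ a-1, p ∣ a+1
        obtain ⟨s, t, hs, ht⟩ := split_sq (w := b) hu hv co (A := ((q:ℕ):ℤ)) (B := ((p:ℕ):ℤ))
          (hqpos) (hppos) (hQ) (hP) (by linear_combination huv)
        exfalso
        have heq : ((p:ℕ):ℤ)*t^2 - (((q:ℕ):ℤ))*s^2 = 2 := by linear_combination hs - ht
        refine bad_case (r := p) (-(((q:ℕ):ℤ))) 2 s ?_ ?_
        · have h' : ((((p:ℕ):ℤ)*t^2 - (((q:ℕ):ℤ))*s^2 : ℤ) : ZMod p) = ((2:ℤ) : ZMod p) := by rw [heq]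
          push_cast at h' ⊢
          rw [ZMod.natCast_self] at h'
          linear_combination h'
        · rw [show (-(((q:ℕ):ℤ)))*2 = ((-1)*(2*((q:ℕ):ℤ)) : ℤ) by ring, legendreSym.mul,
            legendreSym.mul, Lpm1, Lp2, Lpq]
          norm_num
      · -- p,q ∣ a+1 : the good case
        obtain ⟨s, t, hs, ht⟩ := split_sq (w := b) hu hv co (A := (1:ℤ)) (B := ((p:ℕ):ℤ)*((q:ℕ):ℤ))
          one_pos hPQ (one_dvd _) (cpq.mul_dvd hP hQ) (by linear_combination huv)
        refine ⟨s.natAbs, ?_⟩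
        have habs : ((s.natAbs : ℤ))^2 = s^2 := by rw [← Int.abs_eq_natAbs, sq_abs]
        rw [habs]
        linear_combination hs
    · -- a odd : impossible
      exfalso
      obtain ⟨k, hk⟩ := hao
      subst hk
      have hkpos : 0 < k := by
        rcases lt_or_ge 0 k with h | h
        · exact h
        · have hk0 : k = 0 := by omega
          subst hk0
          have h0 : (p:ℤ)*q*b^2 = 0 := by push_cast at hnormpq ⊢; linear_combination -hnormpq
          have h1 : (0:ℤ) < (p:ℤ)*q*b^2 := by nlinarith [hPQ, mul_pos hb hb]
          omega
      have hk1pos : 0 < k + 1 := by omega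
      have hpqb : (p:ℤ)*q*b^2 = 4*(k*(k+1)) := by push_cast at hnormpq ⊢; linear_combination -hnormpq
      have hbeven : Even b := by
        rcases Int.even_or_odd b with he | ho
        · exact he
        · exfalso
          have hpo : Odd ((p:ℕ):ℤ) := by rw [Int.odd_iff]; omega
          have hqo : Odd ((q:ℕ):ℤ) := by rw [Int.odd_iff]; omega
          have hoo : Odd ((p:ℤ)*q*b^2) := (hpo.mul hqo).mul (ho.pow)
          rw [hpqb] at hoo
          exact (Int.not_odd_iff_even.mpr ⟨2*(k*(k+1)), by ring⟩) hoo
      obtain ⟨w, hw⟩ := hbeven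
      have hwpos : 0 < w := by omega
      have huvw : k*(k+1) = (p:ℤ)*q*w^2 := by
        rw [hw] at hpqb
        have h4 : (4:ℤ)*(k*(k+1)) = 4*((p:ℤ)*q*w^2) := by linear_combination -hpqb
        exact mul_left_cancel₀ (by norm_num) h4
      have co : IsCoprime k (k+1) := ⟨-1, 1, by ring⟩
      have hpuv : ((p:ℕ):ℤ) ∣ k*(k+1) := ⟨(q:ℤ)*w^2, by linear_combination huvw⟩
      have hquv : ((q:ℕ):ℤ) ∣ k*(k+1) := ⟨(p:ℤ)*w^2, by linear_combination huvw⟩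
      rcases ((Nat.prime_iff_prime_int.mp hp).dvd_mul).mp hpuv with hP | hP <;>
        rcases ((Nat.prime_iff_prime_int.mp hq).dvd_mul).mp hquv with hQ | hQ
      · -- p,q ∣ k
        obtain ⟨s, t, hs, ht⟩ := split_sq (w := w) hkpos hk1pos co (A := ((p:ℕ):ℤ)*((q:ℕ):ℤ)) (B := (1:ℤ))
          hPQ one_pos (cpq.mul_dvd hP hQ) (one_dvd _) (by linear_combination huvw)
        have hs0 : s ≠ 0 := by rintro rfl; simp at hs; omega
        have ht0 : t ≠ 0 := by rintro rfl; simp at ht; omega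
        have hw2 : (((p:ℕ):ℤ)*((q:ℕ):ℤ)) * w^2 = (((p:ℕ):ℤ)*((q:ℕ):ℤ)) * (s*t)^2 := by
          linear_combination (-1)*huvw + (k+1)*hs + (((p:ℕ):ℤ)*((q:ℕ):ℤ)*s^2)*ht
        have hw2' : w^2 = (s*t)^2 := mul_left_cancel₀ (by positivity) hw2
        have hwval : w = |s| * |t| := by
          rw [← abs_mul]
          exact eq_of_sq_eq_sq (le_of_lt hwpos) (abs_nonneg _) (by rw [sq_abs]; exact hw2')
        refine fund_sq_contra (p*q) (2*k+1) b |t| |s| (abs_pos.mpr ht0) (abs_pos.mpr hs0) hεpq' ?_ ?_ (Or.inl ?_)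
        · rw [sq_abs, sq_abs]; push_cast; linear_combination hs + ht
        · rw [hw, hwval]; ring
        · rw [sq_abs, sq_abs]; push_cast; linear_combination hs - ht
      · -- p ∣ k, q ∣ k+1
        obtain ⟨s, t, hs, ht⟩ := split_sq (w := w) hkpos hk1pos co (A := ((p:ℕ):ℤ)) (B := ((q:ℕ):ℤ))
          (hppos) (hqpos) (hP) (hQ) (by linear_combination huvw)
        have heq : ((q:ℕ):ℤ)*t^2 - (((p:ℕ):ℤ))*s^2 = 1 := by linear_combination hs - ht
        refine bad_case (r := p) (((q:ℕ):ℤ)) 1 t ?_ ?_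
        · have h' : ((((q:ℕ):ℤ)*t^2 - (((p:ℕ):ℤ))*s^2 : ℤ) : ZMod p) = ((1:ℤ) : ZMod p) := by rw [heq]
          push_cast at h' ⊢
          rw [ZMod.natCast_self] at h'
          linear_combination h'
        · rw [mul_one]
          exact Lpq
      · -- q ∣ k, p ∣ k+1
        obtain ⟨s, t, hs, ht⟩ := split_sq (w := w) hkpos hk1pos co (A := ((q:ℕ):ℤ)) (B := ((p:ℕ):ℤ))
          (hqpos) (hppos) (hQ) (hP) (by linear_combination huvw)
        have heq : ((p:ℕ):ℤ)*t^2 - (((q:ℕ):ℤ))*s^2 = 1 := by linear_combination hs - ht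
        refine bad_case (r := q) (((p:ℕ):ℤ)) 1 t ?_ ?_
        · have h' : ((((p:ℕ):ℤ)*t^2 - (((q:ℕ):ℤ))*s^2 : ℤ) : ZMod q) = ((1:ℤ) : ZMod q) := by rw [heq]
          push_cast at h' ⊢
          rw [ZMod.natCast_self] at h'
          linear_combination h'
        · rw [mul_one]
          exact Lqp
      · -- p,q ∣ k+1
        obtain ⟨s, t, hs, ht⟩ := split_sq (w := w) hkpos hk1pos co (A := (1:ℤ)) (B := ((p:ℕ):ℤ)*((q:ℕ):ℤ))
          one_pos hPQ (one_dvd _) (cpq.mul_dvd hP hQ) (by linear_combination huvw)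
        have hs0 : s ≠ 0 := by rintro rfl; simp at hs; omega
        have ht0 : t ≠ 0 := by rintro rfl; simp at ht; omega
        have hw2 : (((p:ℕ):ℤ)*((q:ℕ):ℤ)) * w^2 = (((p:ℕ):ℤ)*((q:ℕ):ℤ)) * (s*t)^2 := by
          linear_combination (-1)*huvw + (k+1)*hs + (s^2)*ht
        have hw2' : w^2 = (s*t)^2 := mul_left_cancel₀ (by positivity) hw2
        have hwval : w = |s| * |t| := by
          rw [← abs_mul]
          exact eq_of_sq_eq_sq (le_of_lt hwpos) (abs_nonneg _) (by rw [sq_abs]; exact hw2')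
        refine fund_sq_contra (p*q) (2*k+1) b |s| |t| (abs_pos.mpr hs0) (abs_pos.mpr ht0) hεpq' ?_ ?_ (Or.inr ?_)
        · rw [sq_abs, sq_abs]; push_cast; linear_combination hs + ht
        · rw [hw, hwval]; ring
        · rw [sq_abs, sq_abs]; push_cast; linear_combination ht - hs
end
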